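/- arXiv:2107.03363 — 5 statements merged into one kernel-verified Lean document; each statement's English description precedes it below -/
import Mathlib

section
/- Let $\{K_N\}_{N=1}^\infty$ be a sequence of positive integers such that $\liminf_{M\to\infty} K_M / \sum_{N=1}^M K_N > 0$. If $\{b_{N,k} : 1 \le k \le K_N, N \ge 1\}$ are i.i.d. integrable random variables with mean $\mu$, then $\lim_{N\to\infty} \frac{1}{K_N}\sum_{k=1}^{K_N} b_{N,k} = \mu$ almost surely. -/
open MeasureTheory ProbabilityTheory Filter Finset Topology

namespace SLLNAux

/-- Partial sums of the row lengths. -/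
def Spart (K : ℕ → ℕ) (M : ℕ) : ℕ := ∑ N ∈ Finset.Icc 1 M, K N

lemma Spart_zero (K : ℕ → ℕ) : Spart K 0 = 0 := by simp [Spart]

lemma Spart_succ (K : ℕ → ℕ) (M : ℕ) : Spart K (M + 1) = Spart K M + K (M + 1) := by
  rw [Spart, Spart, Finset.sum_Icc_succ_top (by omega)]

lemma Spart_mono (K : ℕ → ℕ) : Monotone (Spart K) := fun a b h =>
  Finset.sum_le_sum_of_subset (Finset.Icc_subset_Icc_right h)

lemma le_Spart (K : ℕ → ℕ) (hK : ∀ N, 0 < K N) (M : ℕ) : M ≤ Spart K M := by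
  calc M = ∑ N ∈ Finset.Icc 1 M, 1 := by simp
  _ ≤ ∑ N ∈ Finset.Icc 1 M, K N := Finset.sum_le_sum fun i _ => hK i

/-- The row containing index `n` in the enumeration. -/
noncomputable def firstRow (K : ℕ → ℕ) (n : ℕ) : ℕ := sInf {M | n < Spart K M}

lemma lt_Spart_firstRow (K : ℕ → ℕ) (hK : ∀ N, 0 < K N) (n : ℕ) :
    n < Spart K (firstRow K n) := by
  have hmem : n + 1 ∈ {M | n < Spart K M} := by
    simp only [Set.mem_setOf_eq]
    have := le_Spart K hK (n + 1)
    omega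
  exact Nat.sInf_mem (Set.nonempty_of_mem hmem)

lemma firstRow_pos (K : ℕ → ℕ) (hK : ∀ N, 0 < K N) (n : ℕ) : 0 < firstRow K n := by
  rcases Nat.eq_zero_or_pos (firstRow K n) with h | h
  · have := lt_Spart_firstRow K hK n
    rw [h, Spart_zero] at this; omega
  · exact h

lemma Spart_firstRow_pred_le (K : ℕ → ℕ) (hK : ∀ N, 0 < K N) (n : ℕ) :
    Spart K (firstRow K n - 1) ≤ n := by
  by_contra h
  push_neg at h
  have h1 : firstRow K n ≤ firstRow K n - 1 := Nat.sInf_le h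
  have := firstRow_pos K hK n
  omega

lemma firstRow_eq (K : ℕ → ℕ) (hK : ∀ N, 0 < K N) {M n : ℕ}
    (h1 : Spart K (M - 1) ≤ n) (h2 : n < Spart K M) : firstRow K n = M := by
  have hub : firstRow K n ≤ M := Nat.sInf_le h2
  by_contra hne
  have hlt : firstRow K n < M := lt_of_le_of_ne hub hne
  have hle : firstRow K n ≤ M - 1 := by omega
  have := lt_Spart_firstRow K hK n
  have := Spart_mono K hle
  omega

/-- Enumeration of the pairs `(N, k)` with `1 ≤ k ≤ K N`. -/
noncomputable def enum (K : ℕ → ℕ) (n : ℕ) : ℕ × ℕ :=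
  (firstRow K n, n - Spart K (firstRow K n - 1) + 1)

lemma enum_injective (K : ℕ → ℕ) (hK : ∀ N, 0 < K N) : Function.Injective (enum K) := by
  intro a b h
  have h1 : firstRow K a = firstRow K b := congrArg Prod.fst h
  have h2 : a - Spart K (firstRow K a - 1) + 1 = b - Spart K (firstRow K b - 1) + 1 :=
    congrArg Prod.snd h
  have ha := Spart_firstRow_pred_le K hK a
  have hb := Spart_firstRow_pred_le K hK b
  rw [h1] at h2 ha
  omega

lemma enum_eq (K : ℕ → ℕ) (hK : ∀ N, 0 < K N) {M i : ℕ} (hM : 1 ≤ M) (hi : i < K M) :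
    enum K (Spart K (M - 1) + i) = (M, i + 1) := by
  have hsucc : Spart K M = Spart K (M - 1) + K M := by
    have := Spart_succ K (M - 1)
    have hM1 : M - 1 + 1 = M := by omega
    rw [hM1] at this
    exact this
  have h2 : Spart K (M - 1) + i < Spart K M := by omega
  have hfr : firstRow K (Spart K (M - 1) + i) = M :=
    firstRow_eq K hK (Nat.le_add_right _ _) h2
  unfold enum
  rw [hfr]
  exact Prod.ext rfl (by omega)

lemma sum_enum (K : ℕ → ℕ) (hK : ∀ N, 0 < K N) (f : ℕ × ℕ → ℝ) (M : ℕ) :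
    ∑ i ∈ Finset.range (Spart K M), f (enum K i) =
      ∑ N ∈ Finset.Icc 1 M, ∑ k ∈ Finset.range (K N), f (N, k + 1) := by
  induction M with
  | zero => simp [Spart]
  | succ M ih =>
    rw [Finset.sum_Icc_succ_top (by omega), ← ih]
    have h1 : Spart K M ≤ Spart K (M + 1) := Spart_mono K (by omega)
    rw [Finset.range_eq_Ico, ← Finset.sum_Ico_consecutive _ (Nat.zero_le _) h1,
      ← Finset.range_eq_Ico, Finset.sum_Ico_eq_sum_range]
    congr 1
    have hlen : Spart K (M + 1) - Spart K M = K (M + 1) := by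
      rw [Spart_succ]; omega
    rw [hlen]
    refine Finset.sum_congr rfl fun i hi => ?_
    have hi' : i < K (M + 1) := Finset.mem_range.1 hi
    have := enum_eq K hK (M := M + 1) (i := i) (by omega) hi'
    rw [Nat.succ_sub_one] at this
    rw [this]

end SLLNAux

/-- Doubly-indexed strong law of large numbers: if `b (N, k)` is an i.i.d. family of
integrable random variables with mean `m`, and the positive integers `K N` satisfy
`liminf K M / ∑_{N ≤ M} K N > 0`, then the row averages converge to `m` a.s. -/
theorem stmt0
    {Ω : Type*} [MeasurableSpace Ω] (μ : Measure Ω) [IsProbabilityMeasure μ]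
    (K : ℕ → ℕ) (hK : ∀ N, 0 < K N)
    (hliminf : 0 < Filter.liminf
      (fun M => (K M : ℝ) / ∑ N ∈ Finset.Icc 1 M, (K N : ℝ)) atTop)
    (b : ℕ × ℕ → Ω → ℝ)
    (hmeas : ∀ p, Measurable (b p))
    (hindep : iIndepFun b μ)
    (hident : ∀ p q : ℕ × ℕ, IdentDistrib (b p) (b q) μ μ)
    (hint : ∀ p, Integrable (b p) μ)
    (m : ℝ) (hmean : ∀ p, ∫ ω, b p ω ∂μ = m) :
    ∀ᵐ ω ∂μ, Tendsto
      (fun N => (∑ k ∈ Finset.range (K N), b (N, k + 1) ω) / (K N : ℝ))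
      atTop (nhds m) := by
  classical
  set S : ℕ → ℕ := SLLNAux.Spart K with hSdef
  set X : ℕ → Ω → ℝ := fun i => b (SLLNAux.enum K i) with hXdef
  -- Strong law for the enumerated sequence
  have hXint : Integrable (X 0) μ := hint _
  have hXindep : Pairwise (Function.onFun (IndepFun · · μ) X) := fun i j hij =>
    hindep.indepFun (fun h => hij (SLLNAux.enum_injective K hK h))
  have hXident : ∀ i, IdentDistrib (X i) (X 0) μ μ := fun i => hident _ _
  have hSLLN := strong_law_ae_real X hXint hXindep hXident
  have hmean0 : μ[X 0] = m := hmean _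
  rw [hmean0] at hSLLN
  -- liminf lower bound
  set c : ℝ := Filter.liminf
      (fun M => (K M : ℝ) / ∑ N ∈ Finset.Icc 1 M, (K N : ℝ)) atTop with hcdef
  have hSnat : ∀ M, ((S M : ℕ) : ℝ) = ∑ N ∈ Finset.Icc 1 M, (K N : ℝ) := by
    intro M
    simp [hSdef, SLLNAux.Spart]
  have hcobdd : IsBoundedUnder (· ≥ ·)
      atTop (fun M => (K M : ℝ) / ∑ N ∈ Finset.Icc 1 M, (K N : ℝ)) :=
    Filter.isBoundedUnder_of ⟨0, fun M => by positivity⟩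
  have hev : ∀ᶠ M in atTop, c / 2 < (K M : ℝ) / ∑ N ∈ Finset.Icc 1 M, (K N : ℝ) :=
    Filter.eventually_lt_of_lt_liminf (by linarith) hcobdd
  have hc2 : 0 < c / 2 := by linarith
  -- main argument, pointwise a.e.
  filter_upwards [hSLLN] with ω hA
  set T : ℕ → ℝ := fun n => ∑ i ∈ Finset.range n, X i ω with hTdef
  set A : ℕ → ℝ := fun n => T n / n with hAdef
  have hA' : Tendsto A atTop (𝓝 m) := hA
  have hTA : ∀ n : ℕ, (n : ℝ) * A n = T n := by
    intro n
    rcases Nat.eq_zero_or_pos n with h | h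
    · subst h; simp [hAdef, hTdef]
    · have : (n : ℝ) ≠ 0 := by positivity
      simp only [hAdef]
      field_simp
  -- row sums via telescoping
  have hrow : ∀ N : ℕ, 1 ≤ N →
      (∑ k ∈ Finset.range (K N), b (N, k + 1) ω) = T (S N) - T (S (N - 1)) := by
    intro N hN
    have hTS : ∀ M, T (S M) = ∑ N' ∈ Finset.Icc 1 M, ∑ k ∈ Finset.range (K N'),
        b (N', k + 1) ω := by
      intro M
      exact SLLNAux.sum_enum K hK (fun p => b p ω) M
    have hN1 : N - 1 + 1 = N := by omega
    have := Finset.sum_Icc_succ_top (f := fun N' => ∑ k ∈ Finset.range (K N'),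
        b (N', k + 1) ω) (show 1 ≤ N - 1 + 1 by omega)
    rw [hN1] at this
    rw [hTS, hTS, this]
    ring
  -- S N = S (N-1) + K N
  have hSsucc : ∀ N : ℕ, 1 ≤ N → S N = S (N - 1) + K N := by
    intro N hN
    have := SLLNAux.Spart_succ K (N - 1)
    have hN1 : N - 1 + 1 = N := by omega
    rw [hN1] at this
    exact this
  -- key identity for row averages
  have hkey : ∀ N : ℕ, 1 ≤ N →
      (∑ k ∈ Finset.range (K N), b (N, k + 1) ω) / (K N : ℝ) =
        ((S N : ℝ) / (K N : ℝ)) * (A (S N) - m)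
          - ((S (N - 1) : ℝ) / (K N : ℝ)) * (A (S (N - 1)) - m) + m := by
    intro N hN
    have hKne : (K N : ℝ) ≠ 0 := by
      have := hK N; positivity
    have hScast : (S N : ℝ) = (S (N - 1) : ℝ) + (K N : ℝ) := by
      have := hSsucc N hN; exact_mod_cast congrArg (Nat.cast : ℕ → ℝ) this
    rw [hrow N hN, ← hTA (S N), ← hTA (S (N - 1))]
    field_simp
    rw [hScast]
    ring
  -- the coefficients are eventually bounded by 2 / c
  have hbound : ∀ᶠ N in atTop, (S N : ℝ) / (K N : ℝ) ≤ 2 / c := by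
    filter_upwards [hev, Filter.eventually_ge_atTop 1] with N hN hN1
    rw [← hSnat] at hN
    have hSpos : (0:ℝ) < (S N : ℝ) := by
      have h1 : 0 < S N := lt_of_lt_of_le hN1 (SLLNAux.le_Spart K hK N)
      exact_mod_cast h1
    have hKpos : (0:ℝ) < (K N : ℝ) := by exact_mod_cast hK N
    rw [div_lt_div_iff₀ (by norm_num) hSpos] at hN
    rw [div_le_div_iff₀ hKpos (by linarith)]
    nlinarith
  -- S tends to infinity
  have hStop : Tendsto S atTop atTop :=
    tendsto_atTop_mono (SLLNAux.le_Spart K hK) tendsto_id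
  have hAS : Tendsto (fun N => A (S N) - m) atTop (𝓝 0) := by
    have := (hA'.comp hStop).sub_const m
    simpa using this
  have hAS' : Tendsto (fun N => A (S (N - 1)) - m) atTop (𝓝 0) := by
    have hStop' : Tendsto (fun N => S (N - 1)) atTop atTop :=
      hStop.comp (tendsto_atTop_atTop_of_monotone (fun a b h => by omega)
        (fun n => ⟨n + 1, by omega⟩))
    have := (hA'.comp hStop').sub_const m
    simpa using this
  -- products tend to zero
  have hterm : ∀ (g : ℕ → ℝ), (∀ᶠ N in atTop, (0:ℝ) ≤ g N) →
      (∀ᶠ N in atTop, g N ≤ 2 / c) → ∀ (u : ℕ → ℝ), Tendsto u atTop (𝓝 0) →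
      Tendsto (fun N => g N * u N) atTop (𝓝 0) := by
    intro g hg0 hgb u hu
    have habs : Tendsto (fun N => |g N * u N|) atTop (𝓝 0) := by
      have hlim : Tendsto (fun N => (2 / c) * |u N|) atTop (𝓝 0) := by
        have := hu.abs.const_mul (2 / c)
        simpa using this
      refine squeeze_zero' (Filter.Eventually.of_forall fun N => abs_nonneg _) ?_ hlim
      filter_upwards [hg0, hgb] with N h0 hb
      rw [abs_mul, abs_of_nonneg h0]
      exact mul_le_mul_of_nonneg_right hb (abs_nonneg _)
    exact (tendsto_zero_iff_abs_tendsto_zero _).2 habs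
  have hg0 : ∀ᶠ N in atTop, (0:ℝ) ≤ (S N : ℝ) / (K N : ℝ) :=
    Filter.Eventually.of_forall fun N => by positivity
  have hg0' : ∀ᶠ N in atTop, (0:ℝ) ≤ (S (N - 1) : ℝ) / (K N : ℝ) :=
    Filter.Eventually.of_forall fun N => by positivity
  have hbound' : ∀ᶠ N in atTop, (S (N - 1) : ℝ) / (K N : ℝ) ≤ 2 / c := by
    filter_upwards [hbound] with N hN
    refine le_trans ?_ hN
    have hmono : S (N - 1) ≤ S N := SLLNAux.Spart_mono K (by omega)
    have hm : ((S (N - 1) : ℕ) : ℝ) ≤ ((S N : ℕ) : ℝ) := by exact_mod_cast hmono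
    have hKpos : (0:ℝ) < (K N : ℝ) := by exact_mod_cast hK N
    gcongr
  have ht1 := hterm _ hg0 hbound _ hAS
  have ht2 := hterm _ hg0' hbound' _ hAS'
  have hlim : Tendsto (fun N => ((S N : ℝ) / (K N : ℝ)) * (A (S N) - m)
      - ((S (N - 1) : ℝ) / (K N : ℝ)) * (A (S (N - 1)) - m) + m) atTop (𝓝 m) := by
    have := (ht1.sub ht2).add_const m
    simpa using this
  refine hlim.congr' ?_
  filter_upwards [Filter.eventually_ge_atTop 1] with N hN
  exact (hkey N hN).symm
end

section
/- For every integer $\nu$ and every real $s < 1/2$, $\int_0^1 \frac{\lambda^{-2s}\cos(\nu \arccos \lambda)}{\sqrt{1-\lambda^2}}\,d\lambda = \frac{\pi\, 2^{2s-1}\,\Gamma(1-2s)}{\Gamma(1-s-\frac{\nu}{2})\,\Gamma(1-s+\frac{\nu}{2})}$. -/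
open Real MeasureTheory Set Polynomial.Chebyshev

lemma cpow_eq_ofReal {x w : ℝ} (hx : 0 < x) : (x:ℂ) ^ (w:ℂ) = ((x ^ w : ℝ) : ℂ) :=
  (Complex.ofReal_cpow hx.le w).symm

lemma beta_eqOn {u v : ℝ} :
    EqOn (fun x : ℝ => (x:ℂ) ^ ((u:ℂ)-1) * (1-(x:ℂ)) ^ ((v:ℂ)-1))
      (fun x : ℝ => ((x ^ (u-1) * (1-x) ^ (v-1) : ℝ) : ℂ)) (Ioo 0 1) := by
  intro x hx
  have h1 : (0:ℝ) < x := hx.1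
  have h2 : (0:ℝ) < 1 - x := by linarith [hx.2]
  have e1 : ((u:ℂ)-1) = ((u-1 : ℝ) : ℂ) := by push_cast; ring
  have e2 : ((v:ℂ)-1) = ((v-1 : ℝ) : ℂ) := by push_cast; ring
  have e3 : (1-(x:ℂ)) = ((1-x : ℝ) : ℂ) := by push_cast; ring
  simp only [e1, e2, e3, cpow_eq_ofReal h1, cpow_eq_ofReal h2]
  push_cast
  ring

lemma realBeta_integrable {u v : ℝ} (hu : 0 < u) (hv : 0 < v) :
    IntegrableOn (fun x : ℝ => x ^ (u-1) * (1-x) ^ (v-1)) (Ioo 0 1) := by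
  have h := ((Complex.betaIntegral_convergent (u := (u:ℂ)) (v := (v:ℂ)) (by simpa) (by simpa)).1).mono_set
    (Ioo_subset_Ioc_self : Ioo (0:ℝ) 1 ⊆ Ioc 0 1)
  have h2 := (h.congr_fun beta_eqOn measurableSet_Ioo)
  simpa [IntegrableOn] using h2.re

lemma realBeta {u v : ℝ} (hu : 0 < u) (hv : 0 < v) :
    ∫ x in Ioo (0:ℝ) 1, x ^ (u-1) * (1-x) ^ (v-1)
      = Real.Gamma u * Real.Gamma v / Real.Gamma (u+v) := by
  have key := Complex.Gamma_mul_Gamma_eq_betaIntegral (s := (u:ℂ)) (t := (v:ℂ)) (by simpa) (by simpa)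
  have hbeta : Complex.betaIntegral u v = ((∫ x in Ioo (0:ℝ) 1, x ^ (u-1) * (1-x) ^ (v-1) : ℝ) : ℂ) := by
    rw [Complex.betaIntegral, intervalIntegral.integral_of_le zero_le_one,
      MeasureTheory.integral_Ioc_eq_integral_Ioo,
      setIntegral_congr_fun measurableSet_Ioo beta_eqOn]
    exact integral_ofReal (𝕜 := ℂ)
  rw [hbeta, ← Complex.ofReal_add, Complex.Gamma_ofReal, Complex.Gamma_ofReal,
    Complex.Gamma_ofReal] at key
  have hne : Real.Gamma (u+v) ≠ 0 := (Real.Gamma_pos_of_pos (by linarith)).ne'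
  have := key
  rw [← Complex.ofReal_mul, ← Complex.ofReal_mul, Complex.ofReal_inj] at this
  field_simp
  linarith [this]

lemma sq_image : (fun x : ℝ => x^2) '' Ioo 0 1 = Ioo (0:ℝ) 1 := by
  ext y
  constructor
  · rintro ⟨x, ⟨h0, h1⟩, rfl⟩
    constructor
    · positivity
    · show x^2 < 1
      nlinarith
  · rintro ⟨h0, h1⟩
    exact ⟨Real.sqrt y, ⟨Real.sqrt_pos.2 h0, by
      rw [show (1:ℝ) = Real.sqrt 1 by simp]; exact Real.sqrt_lt_sqrt h0.le h1⟩,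
      Real.sq_sqrt h0.le⟩

lemma sq_deriv : ∀ x ∈ Ioo (0:ℝ) 1, HasDerivWithinAt (fun x : ℝ => x^2) (2*x) (Ioo 0 1) x := by
  intro x _
  simpa [mul_comm] using (hasDerivAt_pow 2 x).hasDerivWithinAt

lemma sq_inj : InjOn (fun x : ℝ => x^2) (Ioo 0 1) := fun a ha b hb h => by
  simp only [] at h
  nlinarith [ha.1, hb.1]

lemma subst_sq (g : ℝ → ℝ) :
    ∫ y in Ioo (0:ℝ) 1, g y = ∫ x in Ioo (0:ℝ) 1, 2 * x * g (x^2) := by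
  conv_lhs => rw [← sq_image]
  rw [integral_image_eq_integral_abs_deriv_smul measurableSet_Ioo sq_deriv sq_inj g]
  refine setIntegral_congr_fun (f := fun x : ℝ => |2*x| • g (x^2)) (g := fun x : ℝ => 2*x*g (x^2)) measurableSet_Ioo (fun x hx => ?_)
  simp only [smul_eq_mul]
  rw [abs_of_pos (by linarith [hx.1] : (0:ℝ) < 2*x)]

lemma subst_sq_integrable (g : ℝ → ℝ) (hg : IntegrableOn g (Ioo 0 1)) :
    IntegrableOn (fun x : ℝ => 2 * x * g (x^2)) (Ioo 0 1) := by
  rw [← sq_image] at hg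
  have := (integrableOn_image_iff_integrableOn_abs_deriv_smul (F := ℝ) measurableSet_Ioo sq_deriv sq_inj g).1 hg
  refine this.congr_fun (fun x hx => ?_) measurableSet_Ioo
  simp only [smul_eq_mul]
  rw [abs_of_pos (by linarith [hx.1] : (0:ℝ) < 2*x)]
lemma rpow_aux {u : ℝ} {x : ℝ} (hx0 : 0 < x) : x ^ (2*u-1) = x * (x^2) ^ (u-1) := by
  rw [← Real.rpow_natCast x 2, ← Real.rpow_mul hx0.le]
  rw [show (2:ℝ)*u-1 = 1 + ((2:ℕ):ℝ)*(u-1) by push_cast; ring, Real.rpow_add hx0, Real.rpow_one]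

lemma pt_eq {u v : ℝ} : EqOn (fun x : ℝ => 2 * x * ((x^2) ^ (u-1) * (1-x^2) ^ (v-1)))
    (fun x : ℝ => 2 * (x ^ (2*u-1) * (1-x^2) ^ (v-1))) (Ioo 0 1) := by
  intro x hx
  simp only []
  rw [rpow_aux hx.1]
  ring

lemma baseInt_integrable {u v : ℝ} (hu : 0 < u) (hv : 0 < v) :
    IntegrableOn (fun x : ℝ => x ^ (2*u-1) * (1-x^2) ^ (v-1)) (Ioo 0 1) := by
  have h := subst_sq_integrable (fun y => y ^ (u-1) * (1-y) ^ (v-1)) (realBeta_integrable hu hv)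
  have h2 : IntegrableOn (fun x : ℝ => 2⁻¹ * (2 * (x ^ (2*u-1) * (1-x^2) ^ (v-1)))) (Ioo 0 1) :=
    (h.congr_fun pt_eq measurableSet_Ioo).const_mul (2⁻¹ : ℝ)
  refine h2.congr_fun (fun x _ => ?_) measurableSet_Ioo
  ring

lemma baseInt {u v : ℝ} (hu : 0 < u) (hv : 0 < v) :
    ∫ x in Ioo (0:ℝ) 1, x ^ (2*u-1) * (1-x^2) ^ (v-1)
      = Real.Gamma u * Real.Gamma v / (2 * Real.Gamma (u+v)) := by
  have h := subst_sq (fun y => y ^ (u-1) * (1-y) ^ (v-1))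
  rw [realBeta hu hv, setIntegral_congr_fun measurableSet_Ioo pt_eq, integral_const_mul] at h
  have hne : Real.Gamma (u+v) ≠ 0 := (Real.Gamma_pos_of_pos (by linarith)).ne'
  rw [eq_div_iff (by positivity : (2:ℝ) * Real.Gamma (u+v) ≠ 0)]
  field_simp at h
  rw [mul_comm u 2] at h
  linarith
lemma T_eval_eq_cos {x : ℝ} (hx : x ∈ Icc (-1:ℝ) 1) (n : ℤ) :
    (T ℝ n).eval x = Real.cos (n * Real.arccos x) := by
  conv_lhs => rw [← Real.cos_arccos hx.1 hx.2]
  exact T_real_cos (Real.arccos x) n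

lemma T_abs_le {x : ℝ} (hx : x ∈ Icc (-1:ℝ) 1) (n : ℤ) : |(T ℝ n).eval x| ≤ 1 := by
  rw [T_eval_eq_cos hx n]; exact Real.abs_cos_le_one _



lemma dom_integrable {s : ℝ} (hs : s < 1/2) :
    IntegrableOn (fun x : ℝ => x ^ (-(2*s)) * (1-x^2) ^ (-(1/2):ℝ)) (Ioo 0 1) := by
  have h := baseInt_integrable (u := 1/2 - s) (v := (1/2:ℝ)) (by linarith) (by norm_num)
  have : (fun x : ℝ => x ^ (2*(1/2-s)-1) * (1-x^2) ^ ((1/2:ℝ)-1))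
      = fun x : ℝ => x ^ (-(2*s)) * (1-x^2) ^ (-(1/2):ℝ) := by
    funext x
    rw [show 2*((1:ℝ)/2-s)-1 = -(2*s) by ring, show (1/2:ℝ)-1 = -(1/2) by norm_num]
  rwa [this] at h

lemma cheb_integrable {s : ℝ} (hs : s < 1/2) (n : ℤ) :
    IntegrableOn (fun x : ℝ => x ^ (-(2*s)) * (T ℝ n).eval x * (1-x^2) ^ (-(1/2):ℝ))
      (Ioo 0 1) := by
  refine Integrable.mono (dom_integrable hs) ?_ ?_
  · apply Measurable.aestronglyMeasurable
    fun_prop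
  · rw [ae_restrict_iff' measurableSet_Ioo]
    filter_upwards with x hx
    have hx0 : (0:ℝ) < x := hx.1
    have hx1 : x < 1 := hx.2
    have h1 : (0:ℝ) ≤ x ^ (-(2*s)) := Real.rpow_nonneg hx0.le _
    have h2 : (0:ℝ) ≤ (1-x^2) ^ (-(1/2):ℝ) := Real.rpow_nonneg (by nlinarith) _
    have hT := T_abs_le (⟨by linarith, hx1.le⟩ : x ∈ Icc (-1:ℝ) 1) n
    rw [Real.norm_eq_abs, Real.norm_eq_abs, abs_mul, abs_mul, abs_of_nonneg h1,
      abs_of_nonneg h2, abs_of_nonneg (by positivity : (0:ℝ) ≤ x ^ (-(2*s)) * (1-x^2) ^ (-(1/2):ℝ))]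
    calc x ^ (-(2*s)) * |(T ℝ n).eval x| * (1-x^2) ^ (-(1/2):ℝ)
        ≤ x ^ (-(2*s)) * 1 * (1-x^2) ^ (-(1/2):ℝ) := by
          gcongr
      _ = x ^ (-(2*s)) * (1-x^2) ^ (-(1/2):ℝ) := by ring

lemma Gamma_inv_rec (x : ℝ) : (Real.Gamma x)⁻¹ = x * (Real.Gamma (x+1))⁻¹ := by
  rcases eq_or_ne x 0 with rfl | hx
  · simp [Real.Gamma_zero]
  · rw [Real.Gamma_add_one hx, mul_inv, ← mul_assoc, mul_inv_cancel₀ hx, one_mul]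

lemma gamma_core (x y : ℝ) :
    (x+y-1) * ((Real.Gamma x)⁻¹ * (Real.Gamma (y+1))⁻¹)
      - (Real.Gamma x)⁻¹ * (Real.Gamma y)⁻¹
    = (Real.Gamma (x-1))⁻¹ * (Real.Gamma (y+1))⁻¹ := by
  have h1 : (Real.Gamma y)⁻¹ = y * (Real.Gamma (y+1))⁻¹ := Gamma_inv_rec y
  have h2 : (Real.Gamma (x-1))⁻¹ = (x-1) * (Real.Gamma x)⁻¹ := by
    have := Gamma_inv_rec (x-1)
    rwa [sub_add_cancel] at this
  rw [h1, h2]; ring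

lemma rhs_rec (s t : ℝ) (hs : s < 1/2) :
    2 * (π * 2 ^ (2*(s-1/2)-1) * Real.Gamma (1-2*(s-1/2))
        / (Real.Gamma (1-(s-1/2)-(t+1)/2) * Real.Gamma (1-(s-1/2)+(t+1)/2)))
      - π * 2 ^ (2*s-1) * Real.Gamma (1-2*s)
        / (Real.Gamma (1-s-t/2) * Real.Gamma (1-s+t/2))
    = π * 2 ^ (2*s-1) * Real.Gamma (1-2*s)
        / (Real.Gamma (1-s-(t+2)/2) * Real.Gamma (1-s+(t+2)/2)) := by
  have h2s : (1:ℝ)-2*s ≠ 0 := by linarith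
  rw [show (1:ℝ)-2*(s-1/2) = (1-2*s)+1 by ring, Real.Gamma_add_one h2s,
      show (1:ℝ)-(s-1/2)-(t+1)/2 = 1-s-t/2 by ring,
      show (1:ℝ)-(s-1/2)+(t+1)/2 = (1-s+t/2)+1 by ring,
      show (1:ℝ)-s-(t+2)/2 = (1-s-t/2)-1 by ring,
      show (1:ℝ)-s+(t+2)/2 = (1-s+t/2)+1 by ring,
      show 2*(s-1/2)-1 = (2*s-1)+(-1) by ring,
      Real.rpow_add two_pos, Real.rpow_neg_one]
  have hc := gamma_core (1-s-t/2) (1-s+t/2)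
  rw [show (1-s-t/2) + (1-s+t/2) - 1 = 1-2*s by ring] at hc
  have hdiv : ∀ a b c : ℝ, a/(b*c) = a*(b⁻¹*c⁻¹) := fun a b c => by
    rw [div_eq_mul_inv, mul_inv]
  simp only [hdiv]
  linear_combination (π * 2^(2*s-1) * Real.Gamma (1-2*s)) * hc

lemma dup_eq (s : ℝ) : Real.Gamma (1/2-s) * Real.Gamma (1-s)
    = Real.Gamma (1-2*s) * 2 ^ (2*s) * √π := by
  have h := Real.Gamma_mul_Gamma_add_half (1/2-s)
  rw [show (1:ℝ)/2-s+1/2 = 1-s by ring, show 2*((1:ℝ)/2-s) = 1-2*s by ring,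
    show 1-((1:ℝ)-2*s) = 2*s by ring] at h
  exact h

lemma rhs_base0 (s : ℝ) (hs : s < 1/2) :
    Real.Gamma (1/2-s) * Real.Gamma (1/2) / (2 * Real.Gamma (1-s))
      = π * 2 ^ (2*s-1) * Real.Gamma (1-2*s) / (Real.Gamma (1-s) * Real.Gamma (1-s)) := by
  have h1 : (0:ℝ) < Real.Gamma (1-s) := Real.Gamma_pos_of_pos (by linarith)
  have hsq : √π * √π = π := Real.mul_self_sqrt pi_pos.le
  have hp : (0:ℝ) < √π := Real.sqrt_pos.2 pi_pos
  have h2 : (2:ℝ) ^ (2*s-1) = 2 ^ (2*s) * 2⁻¹ := by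
    rw [show 2*s-1 = 2*s + (-1) by ring, Real.rpow_add two_pos, Real.rpow_neg_one]
  rw [Real.Gamma_one_half_eq, h2, div_eq_div_iff (by positivity) (by positivity)]
  linear_combination (√π * Real.Gamma (1-s)) * dup_eq s + Real.Gamma (1-2*s) * 2^(2*s) * Real.Gamma (1-s) * hsq

lemma rhs_base1 (s : ℝ) (hs : s < 1/2) :
    Real.Gamma (1-s) * Real.Gamma (1/2) / (2 * Real.Gamma (3/2-s))
      = π * 2 ^ (2*s-1) * Real.Gamma (1-2*s) / (Real.Gamma (1/2-s) * Real.Gamma (3/2-s)) := by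
  have h1 : (0:ℝ) < Real.Gamma (3/2-s) := Real.Gamma_pos_of_pos (by linarith)
  have h0 : (0:ℝ) < Real.Gamma (1/2-s) := Real.Gamma_pos_of_pos (by linarith)
  have hsq : √π * √π = π := Real.mul_self_sqrt pi_pos.le
  have hp : (0:ℝ) < √π := Real.sqrt_pos.2 pi_pos
  have h2 : (2:ℝ) ^ (2*s-1) = 2 ^ (2*s) * 2⁻¹ := by
    rw [show 2*s-1 = 2*s + (-1) by ring, Real.rpow_add two_pos, Real.rpow_neg_one]
  rw [Real.Gamma_one_half_eq, h2, div_eq_div_iff (by positivity) (by positivity)]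
  linear_combination (√π * Real.Gamma (3/2-s)) * dup_eq s + Real.Gamma (1-2*s) * 2^(2*s) * Real.Gamma (3/2-s) * hsq

lemma keyN (n : ℕ) : ∀ (s : ℝ), s < 1/2 →
    ∫ x in Ioo (0:ℝ) 1, x ^ (-(2*s)) * (T ℝ (n:ℤ)).eval x * (1-x^2) ^ (-(1/2):ℝ)
      = π * 2 ^ (2*s-1) * Real.Gamma (1-2*s)
        / (Real.Gamma (1-s-(n:ℝ)/2) * Real.Gamma (1-s+(n:ℝ)/2)) := by
  induction n using Nat.twoStepInduction with
  | zero =>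
    intro s hs
    have e1 : EqOn (fun x : ℝ => x ^ (-(2*s)) * (T ℝ ((0:ℕ):ℤ)).eval x * (1-x^2) ^ (-(1/2):ℝ))
        (fun x : ℝ => x ^ (2*(1/2-s)-1) * (1-x^2) ^ ((1/2:ℝ)-1)) (Ioo 0 1) := by
      intro x hx
      simp only [Nat.cast_zero, T_zero, Polynomial.eval_one, mul_one]
      rw [show 2*((1:ℝ)/2-s)-1 = -(2*s) by ring, show (1/2:ℝ)-1 = -(1/2) by norm_num]
    rw [setIntegral_congr_fun measurableSet_Ioo e1, baseInt (by linarith) (by norm_num)]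
    rw [show (1/2:ℝ)-s+1/2 = 1-s by ring, show (1:ℝ)-s-((0:ℕ):ℝ)/2 = 1-s by norm_num,
      show (1:ℝ)-s+((0:ℕ):ℝ)/2 = 1-s by norm_num]
    exact rhs_base0 s hs
  | one =>
    intro s hs
    have e1 : EqOn (fun x : ℝ => x ^ (-(2*s)) * (T ℝ ((1:ℕ):ℤ)).eval x * (1-x^2) ^ (-(1/2):ℝ))
        (fun x : ℝ => x ^ (2*(1-s)-1) * (1-x^2) ^ ((1/2:ℝ)-1)) (Ioo 0 1) := by
      intro x hx
      simp only [Nat.cast_one, T_one, Polynomial.eval_X]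
      rw [show 2*((1:ℝ)-s)-1 = -(2*s)+1 by ring, show (1/2:ℝ)-1 = -(1/2) by norm_num,
        Real.rpow_add hx.1, Real.rpow_one]
    rw [setIntegral_congr_fun measurableSet_Ioo e1, baseInt (by linarith) (by norm_num)]
    rw [show (1:ℝ)-s+1/2 = 3/2-s by ring, show (1:ℝ)-s-((1:ℕ):ℝ)/2 = 1/2-s by push_cast; ring,
      show (1:ℝ)-s+((1:ℕ):ℝ)/2 = 3/2-s by push_cast; ring]
    exact rhs_base1 s hs
  | more n ih1 ih2 =>
    intro s hs
    have hs' : s - 1/2 < 1/2 := by linarith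
    have e1 : EqOn (fun x : ℝ => x ^ (-(2*s)) * (T ℝ ((n+2:ℕ):ℤ)).eval x * (1-x^2) ^ (-(1/2):ℝ))
        (fun x : ℝ => 2 * (x ^ (-(2*(s-1/2))) * (T ℝ ((n+1:ℕ):ℤ)).eval x * (1-x^2) ^ (-(1/2):ℝ))
          - x ^ (-(2*s)) * (T ℝ (n:ℤ)).eval x * (1-x^2) ^ (-(1/2):ℝ)) (Ioo 0 1) := by
      intro x hx
      have hcast : ((n+2:ℕ):ℤ) = (n:ℤ)+2 := by push_cast; ring
      have hcast1 : ((n+1:ℕ):ℤ) = (n:ℤ)+1 := by push_cast; ring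
      simp only [hcast, hcast1, T_add_two, Polynomial.eval_sub, Polynomial.eval_mul,
        Polynomial.eval_ofNat, Polynomial.eval_X]
      have hx1 : x ^ (-(2*(s-1/2))) = x ^ (-(2*s)) * x := by
        rw [show -(2*(s-1/2)) = -(2*s)+1 by ring, Real.rpow_add hx.1, Real.rpow_one]
      rw [hx1]; ring
    rw [setIntegral_congr_fun measurableSet_Ioo e1,
      integral_sub ((cheb_integrable hs' ((n+1:ℕ):ℤ)).const_mul 2) (cheb_integrable hs ((n:ℕ):ℤ)),
      integral_const_mul]
    have h2 := ih2 (s-1/2) hs'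
    have h1 := ih1 s hs
    rw [h1, h2]
    have := rhs_rec s (n:ℝ) hs
    push_cast
    push_cast at this
    linarith [this]

lemma keyZ (ν : ℤ) (s : ℝ) (hs : s < 1/2) :
    ∫ x in Ioo (0:ℝ) 1, x ^ (-(2*s)) * (T ℝ ν).eval x * (1-x^2) ^ (-(1/2):ℝ)
      = π * 2 ^ (2*s-1) * Real.Gamma (1-2*s)
        / (Real.Gamma (1-s-(ν:ℝ)/2) * Real.Gamma (1-s+(ν:ℝ)/2)) := by
  rcases Int.natAbs_eq ν with h | h
  · rw [h]
    simp only [Int.cast_natCast]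
    exact keyN ν.natAbs s hs
  · rw [h, T_neg]
    simp only [Int.cast_neg, Int.cast_natCast]
    rw [show 1-s- -((ν.natAbs:ℝ))/2 = 1-s+(ν.natAbs:ℝ)/2 by ring,
      show 1-s+ -((ν.natAbs:ℝ))/2 = 1-s-(ν.natAbs:ℝ)/2 by ring,
      mul_comm (Real.Gamma (1-s+(ν.natAbs:ℝ)/2))]
    exact keyN ν.natAbs s hs


/-- For every integer `ν` and every real `s < 1/2`,
`∫_0^1 λ^{-2s} cos(ν arccos λ) / √(1-λ²) dλ
  = π 2^{2s-1} Γ(1-2s) / (Γ(1-s-ν/2) Γ(1-s+ν/2))`. -/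
theorem stmt1 (ν : ℤ) (s : ℝ) (hs : s < 1/2) :
    ∫ lam in (0:ℝ)..1,
        lam ^ (-(2*s)) * Real.cos (ν * Real.arccos lam) / Real.sqrt (1 - lam^2)
      = π * 2 ^ (2*s - 1) * Real.Gamma (1 - 2*s) /
        (Real.Gamma (1 - s - ν/2) * Real.Gamma (1 - s + ν/2)) := by
  rw [intervalIntegral.integral_of_le zero_le_one, MeasureTheory.integral_Ioc_eq_integral_Ioo]
  have e1 : EqOn (fun lam : ℝ => lam ^ (-(2*s)) * Real.cos (ν * Real.arccos lam) / Real.sqrt (1 - lam^2))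
      (fun lam : ℝ => lam ^ (-(2*s)) * (T ℝ ν).eval lam * (1-lam^2) ^ (-(1/2):ℝ)) (Ioo 0 1) := by
    intro x hx
    have hm : x ∈ Icc (-1:ℝ) 1 := ⟨by linarith [hx.1], hx.2.le⟩
    have hpos : (0:ℝ) ≤ 1 - x^2 := by nlinarith [hx.1, hx.2]
    simp only [T_eval_eq_cos hm, Real.sqrt_eq_rpow]
    rw [Real.rpow_neg hpos, div_eq_mul_inv]
  rw [setIntegral_congr_fun measurableSet_Ioo e1]
  exact keyZ ν s hs
end

section
/- For every odd integer $\nu$, $\int_0^1 \frac{\cos(\nu\arccos\lambda)}{\lambda\sqrt{1-\lambda^2}}\,d\lambda = \frac{\pi}{2}\sin\left(\frac{\pi}{2}|\nu|\right)$. -/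
open Real

open MeasureTheory Set
-- |cos((2k+1)t)| ≤ (2k+1)|cos t|
lemma cos_odd_bound (k : ℕ) (t : ℝ) :
    |Real.cos ((2*k+1) * t)| ≤ (2*k+1) * |Real.cos t| := by
  induction k with
  | zero => simp
  | succ n ih =>
    push_cast
    rw [show (2*((n:ℝ)+1)+1) = 2*(n:ℝ)+3 by ring]
    have key : Real.cos ((2*(n:ℝ)+3) * t)
        = 2 * Real.cos ((2*n+2) * t) * Real.cos t - Real.cos ((2*n+1) * t) := by
      have := Real.cos_add ((2*n+2) * t) t
      have := Real.cos_sub ((2*n+2) * t) t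
      have h1 : ((2*(n:ℝ)+3)) * t = (2*n+2) * t + t := by push_cast; ring
      have h2 : ((2*n+1) : ℝ) * t = (2*n+2) * t - t := by push_cast; ring
      rw [h1, h2, Real.cos_add, Real.cos_sub]; ring
    calc |Real.cos ((2*(n:ℝ)+3) * t)|
        ≤ |2 * Real.cos ((2*n+2) * t) * Real.cos t| + |Real.cos ((2*n+1) * t)| := by
          rw [key]; exact abs_sub _ _
      _ ≤ 2 * |Real.cos t| + (2*n+1) * |Real.cos t| := by
          have hb : |2 * Real.cos ((2*n+2) * t) * Real.cos t| ≤ 2 * |Real.cos t| := by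
            calc |2 * Real.cos ((2*n+2) * t) * Real.cos t|
                = 2 * |Real.cos ((2*n+2) * t)| * |Real.cos t| := by
                  rw [abs_mul, abs_mul]; simp [abs_of_nonneg]
              _ ≤ 2 * 1 * |Real.cos t| := by gcongr; exact Real.abs_cos_le_one _
              _ = 2 * |Real.cos t| := by ring
          exact add_le_add hb ih
      _ = (2*(n:ℝ)+3) * |Real.cos t| := by ring

lemma integrable_inv_sqrt_one_sub :
    IntervalIntegrable (fun x : ℝ => (1-x) ^ (-(1/2):ℝ)) volume 0 1 := by
  have h := intervalIntegral.intervalIntegrable_rpow' (a:=(0:ℝ)) (b:=1) (r := -(1/2)) (by norm_num)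
  have h2 := h.comp_sub_left 1
  simpa using h2.symm

lemma rpow_eq_inv_sqrt {x : ℝ} (hx : x ≤ 1) :
    (1-x) ^ (-(1/2):ℝ) = (Real.sqrt (1-x))⁻¹ := by
  rw [Real.rpow_neg (by linarith), Real.sqrt_eq_rpow]

lemma integrable_of_bound (f : ℝ → ℝ)
    (hm : AEStronglyMeasurable f (volume.restrict (Set.uIoc (0:ℝ) 1))) (C : ℝ) (hC : 0 ≤ C)
    (h : ∀ x ∈ Ioc (0:ℝ) 1, |f x| ≤ C * (1-x) ^ (-(1/2):ℝ)) :
    IntervalIntegrable f volume 0 1 := by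
  apply (integrable_inv_sqrt_one_sub.const_mul C).mono_fun hm
  have hI : Set.uIoc (0:ℝ) 1 = Ioc 0 1 := uIoc_of_le (by norm_num)
  rw [Filter.EventuallyLE, ae_restrict_iff' (by rw [hI]; exact measurableSet_Ioc)]
  filter_upwards with x hx
  rw [hI] at hx
  have h1 : (0:ℝ) ≤ (1-x) ^ (-(1/2):ℝ) := Real.rpow_nonneg (by linarith [hx.2]) _
  simp only [Real.norm_eq_abs]
  calc |f x| ≤ C * (1-x) ^ (-(1/2):ℝ) := h x hx
    _ ≤ |C * (1-x) ^ (-(1/2):ℝ)| := le_abs_self _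

lemma sqrt_ineq {x : ℝ} (hx : x ∈ Ioc (0:ℝ) 1) (hx1 : x ≠ 1) :
    0 < Real.sqrt (1-x) ∧ Real.sqrt (1-x) ≤ Real.sqrt (1-x^2) := by
  obtain ⟨h0, h1⟩ := hx
  have hlt : x < 1 := lt_of_le_of_ne h1 hx1
  constructor
  · exact Real.sqrt_pos.mpr (by linarith)
  · apply Real.sqrt_le_sqrt; nlinarith

lemma integrable_g (m : ℝ) :
    IntervalIntegrable (fun x => Real.cos (m * Real.arccos x) / Real.sqrt (1-x^2)) volume 0 1 := by
  apply integrable_of_bound _ ?_ 1 zero_le_one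
  · intro x hx
    rw [one_mul, rpow_eq_inv_sqrt hx.2]
    rcases eq_or_ne x 1 with rfl | hx1
    · simp
    obtain ⟨hs0, hs⟩ := sqrt_ineq hx hx1
    have hs2 : 0 < Real.sqrt (1-x^2) := lt_of_lt_of_le hs0 hs
    rw [abs_div, abs_of_nonneg (Real.sqrt_nonneg _)]
    calc |Real.cos (m * Real.arccos x)| / Real.sqrt (1-x^2)
        ≤ 1 / Real.sqrt (1-x^2) := by gcongr; exact Real.abs_cos_le_one _
      _ ≤ 1 / Real.sqrt (1-x) := by gcongr
      _ = (Real.sqrt (1-x))⁻¹ := one_div _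
  · have m1 : Measurable fun x : ℝ => Real.cos (m * Real.arccos x) :=
      Real.measurable_cos.comp (measurable_const.mul Real.continuous_arccos.measurable)
    have m2 : Measurable fun x : ℝ => Real.sqrt (1 - x^2) :=
      Real.continuous_sqrt.measurable.comp (measurable_const.sub (measurable_id.pow_const 2))
    exact (m1.div m2).aestronglyMeasurable

lemma integrable_h (k : ℕ) :
    IntervalIntegrable
      (fun x => Real.cos ((2*k+1) * Real.arccos x) / (x * Real.sqrt (1-x^2))) volume 0 1 := by
  apply integrable_of_bound _ ?_ (2*k+1) (by positivity)
  · intro x hx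
    rw [rpow_eq_inv_sqrt hx.2]
    rcases eq_or_ne x 1 with rfl | hx1
    · simp
    obtain ⟨hs0, hs⟩ := sqrt_ineq hx hx1
    have hs2 : 0 < Real.sqrt (1-x^2) := lt_of_lt_of_le hs0 hs
    have hx0 : 0 < x := hx.1
    have hxx : Real.cos (Real.arccos x) = x := Real.cos_arccos (by linarith [hx.1]) hx.2
    have hb : |Real.cos ((2*k+1) * Real.arccos x)| ≤ (2*k+1) * x := by
      have := cos_odd_bound k (Real.arccos x)
      rwa [hxx, abs_of_pos hx.1] at this
    rw [abs_div, abs_of_pos (mul_pos hx0 hs2)]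
    calc |Real.cos ((2*k+1) * Real.arccos x)| / (x * Real.sqrt (1-x^2))
        ≤ ((2*k+1) * x) / (x * Real.sqrt (1-x^2)) := (div_le_div_iff_of_pos_right (mul_pos hx0 hs2)).mpr hb
      _ = (2*k+1) / Real.sqrt (1-x^2) := by
          rw [mul_comm ((2*k+1:ℝ)) x, mul_div_mul_left _ _ (ne_of_gt hx.1)]
      _ ≤ (2*k+1) / Real.sqrt (1-x) := by gcongr
      _ = (2*k+1) * (Real.sqrt (1-x))⁻¹ := by rw [div_eq_mul_inv]
  · have m1 : Measurable fun x : ℝ => Real.cos ((2*k+1) * Real.arccos x) :=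
      Real.measurable_cos.comp (measurable_const.mul Real.continuous_arccos.measurable)
    have m2 : Measurable fun x : ℝ => x * Real.sqrt (1 - x^2) :=
      measurable_id.mul (Real.continuous_sqrt.measurable.comp
        (measurable_const.sub (measurable_id.pow_const 2)))
    exact (m1.div m2).aestronglyMeasurable

lemma integrable_inv_sqrt_sq :
    IntervalIntegrable (fun x : ℝ => 1 / Real.sqrt (1-x^2)) volume 0 1 := by
  apply integrable_of_bound _ ?_ 1 zero_le_one
  · intro x hx
    rw [one_mul, rpow_eq_inv_sqrt hx.2]
    rcases eq_or_ne x 1 with rfl | hx1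
    · simp
    obtain ⟨hs0, hs⟩ := sqrt_ineq hx hx1
    have hs2 : 0 < Real.sqrt (1-x^2) := lt_of_lt_of_le hs0 hs
    rw [abs_of_nonneg (by positivity), one_div]
    exact inv_anti₀ hs0 hs
  · have m2 : Measurable fun x : ℝ => Real.sqrt (1 - x^2) :=
      Real.continuous_sqrt.measurable.comp (measurable_const.sub (measurable_id.pow_const 2))
    exact (measurable_const.div m2).aestronglyMeasurable

lemma integral_base : ∫ x in (0:ℝ)..1, 1 / Real.sqrt (1-x^2) = π/2 := by
  have := intervalIntegral.integral_eq_sub_of_hasDerivAt_of_tendsto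
    (f := Real.arcsin) (f' := fun x => 1 / Real.sqrt (1-x^2)) (a := 0) (b := 1)
    (by norm_num)
    (fun x hx => Real.hasDerivAt_arcsin (by rintro rfl; exact absurd hx.1 (by norm_num))
      (ne_of_lt hx.2))
    integrable_inv_sqrt_sq
    ((Real.continuous_arcsin.tendsto 0).mono_left nhdsWithin_le_nhds)
    ((Real.continuous_arcsin.tendsto 1).mono_left nhdsWithin_le_nhds)
  simpa [Real.arcsin_one, Real.arcsin_zero] using this

lemma integral_g_even (m : ℝ) (hm : m ≠ 0) (hsin : Real.sin (m * (π/2)) = 0) :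
    ∫ x in (0:ℝ)..1, Real.cos (m * Real.arccos x) / Real.sqrt (1-x^2) = 0 := by
  have hF : Continuous fun x : ℝ => -Real.sin (m * Real.arccos x) / m :=
    ((Real.continuous_sin.comp (continuous_const.mul Real.continuous_arccos)).neg).div_const m
  have key := intervalIntegral.integral_eq_sub_of_hasDerivAt_of_tendsto
    (f := fun x : ℝ => -Real.sin (m * Real.arccos x) / m)
    (f' := fun x => Real.cos (m * Real.arccos x) / Real.sqrt (1-x^2)) (a := 0) (b := 1)
    (by norm_num)
    ?_ (integrable_g m)
    ((hF.tendsto 0).mono_left nhdsWithin_le_nhds)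
    ((hF.tendsto 1).mono_left nhdsWithin_le_nhds)
  · rw [key]
    simp [Real.arccos_zero, Real.arccos_one, hsin]
  · intro x hx
    have h1 : x ≠ -1 := by rintro rfl; exact absurd hx.1 (by norm_num)
    have h2 : x ≠ 1 := ne_of_lt hx.2
    have ha := (Real.hasDerivAt_arccos h1 h2).const_mul m
    have hs := (Real.hasDerivAt_sin (m * Real.arccos x)).comp x ha
    have := (hs.neg).div_const m
    convert this using 1
    case e'_4 => rfl
    case e'_8 => rfl
    have hs2 : (0:ℝ) < Real.sqrt (1-x^2) := by
      apply Real.sqrt_pos.mpr; nlinarith [hx.1, hx.2]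
    field_simp

lemma I_odd (k : ℕ) :
    ∫ x in (0:ℝ)..1, Real.cos ((2*k+1) * Real.arccos x) / (x * Real.sqrt (1-x^2))
      = π/2 * (-1)^k := by
  induction k with
  | zero =>
    rw [show ∫ x in (0:ℝ)..1, Real.cos ((2*(0:ℕ)+1) * Real.arccos x) / (x * Real.sqrt (1-x^2))
        = ∫ x in (0:ℝ)..1, 1 / Real.sqrt (1-x^2) from ?_]
    · simpa using integral_base
    apply intervalIntegral.integral_congr_ae
    filter_upwards with x hx
    rw [uIoc_of_le (by norm_num : (0:ℝ) ≤ 1)] at hx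
    rcases eq_or_ne x 1 with rfl | hx1
    · norm_num
    obtain ⟨hs0, hs⟩ := sqrt_ineq hx hx1
    have hs2 : 0 < Real.sqrt (1-x^2) := lt_of_lt_of_le hs0 hs
    have hxx : Real.cos (Real.arccos x) = x := Real.cos_arccos (by linarith [hx.1]) hx.2
    norm_num
    rw [hxx]
    have hx0 : x ≠ 0 := ne_of_gt hx.1
    field_simp
  | succ n ih =>
    have hsplit : ∫ x in (0:ℝ)..1,
          Real.cos ((2*(n+1:ℕ)+1) * Real.arccos x) / (x * Real.sqrt (1-x^2))
        = ∫ x in (0:ℝ)..1,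
            (2 * (Real.cos ((2*n+2) * Real.arccos x) / Real.sqrt (1-x^2))
             - Real.cos ((2*n+1) * Real.arccos x) / (x * Real.sqrt (1-x^2))) := by
      apply intervalIntegral.integral_congr_ae
      filter_upwards with x hx
      rw [uIoc_of_le (by norm_num : (0:ℝ) ≤ 1)] at hx
      rcases eq_or_ne x 1 with rfl | hx1
      · norm_num
      obtain ⟨hs0, hs⟩ := sqrt_ineq hx hx1
      have hs2 : 0 < Real.sqrt (1-x^2) := lt_of_lt_of_le hs0 hs
      have hxx : Real.cos (Real.arccos x) = x := Real.cos_arccos (by linarith [hx.1]) hx.2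
      have key : Real.cos ((2*(n:ℝ)+3) * Real.arccos x)
          = 2 * Real.cos ((2*n+2) * Real.arccos x) * x - Real.cos ((2*n+1) * Real.arccos x) := by
        set t := Real.arccos x
        have h1 : (2*(n:ℝ)+3) * t = (2*n+2) * t + t := by ring
        have h2 : ((2*n+1) : ℝ) * t = (2*n+2) * t - t := by ring
        rw [h1, h2, Real.cos_add, Real.cos_sub, hxx]; ring
      push_cast
      rw [show (2*((n:ℝ)+1)+1) = 2*(n:ℝ)+3 by ring, key]
      have hx0 : x ≠ 0 := ne_of_gt hx.1
      field_simp
    rw [hsplit, intervalIntegral.integral_sub (((integrable_g (2*n+2)).const_mul 2).congr ?meq)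
        (by exact_mod_cast integrable_h n),
      show (∫ x in (0:ℝ)..1, 2 * (Real.cos ((2*(n:ℝ)+2) * Real.arccos x) / Real.sqrt (1-x^2)))
        = 2 * ∫ x in (0:ℝ)..1, Real.cos ((2*(n:ℝ)+2) * Real.arccos x) / Real.sqrt (1-x^2)
        from intervalIntegral.integral_const_mul 2 _]
    case meq => exact fun _ _ => rfl
    rw [integral_g_even (2*n+2) (by positivity) ?hs, ih]
    · ring
    case hs =>
      rw [show (2*(n:ℝ)+2) * (π/2) = (n+1 : ℕ) * π by push_cast; ring]
      exact Real.sin_nat_mul_pi (n+1)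


/-- For every odd integer `ν`,
`∫_0^1 cos(ν arccos λ)/(λ √(1-λ²)) dλ = (π/2) sin(π|ν|/2)`. -/
theorem stmt2 (ν : ℤ) (hν : Odd ν) :
    ∫ lam in (0:ℝ)..1,
        Real.cos (ν * Real.arccos lam) / (lam * Real.sqrt (1 - lam^2))
      = π / 2 * Real.sin (π / 2 * |(ν : ℝ)|) := by
  have hna : Odd ν.natAbs := Int.natAbs_odd.mpr hν
  obtain ⟨k, hk⟩ := hna
  have habs : |(ν : ℝ)| = 2*k+1 := by
    rw [← Int.cast_abs, Int.abs_eq_natAbs, hk]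
    push_cast; ring
  have hfun : (fun lam : ℝ => Real.cos (ν * Real.arccos lam) / (lam * Real.sqrt (1 - lam^2)))
      = fun lam : ℝ => Real.cos ((2*k+1) * Real.arccos lam) / (lam * Real.sqrt (1 - lam^2)) := by
    funext lam
    congr 1
    rw [← Real.cos_abs ((ν:ℝ) * Real.arccos lam), abs_mul, habs,
      abs_of_nonneg (Real.arccos_nonneg lam)]
  rw [hfun, habs]
  have := I_odd k
  push_cast at this ⊢
  rw [this]
  congr 1
  have hc : Real.cos (k * π) = (-1)^k := by
    have := Real.cos_nat_mul_pi_sub 0 k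
    simpa using this
  rw [show π/2 * (2*(k:ℝ)+1) = (k:ℝ)*π + π/2 by ring, Real.sin_add, Real.sin_nat_mul_pi,
    Real.sin_pi_div_two, Real.cos_pi_div_two, hc]
  ring
end

section
/- Let $P$ be a positive continuous $\pi$-periodic function on $\mathbb{R}$, and let $a \ge 0$, $b \in \mathbb{R}$, with $b \ge 0$ in case $a = 0$. Then as $R \to \infty$, $\int_{\pi}^{R} r^a (\log r)^b P(r)\,dr \sim \frac{R^{a+1}(\log R)^b}{\pi(a+1)} \int_0^{\pi} P(r)\,dr$, i.e. the ratio of the two sides tends to 1. -/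
open Real Filter

open MeasureTheory Set Asymptotics intervalIntegral

private lemma aux_hasDeriv (p q : ℝ) {x : ℝ} (hx : 1 < x) :
    HasDerivAt (fun r : ℝ => r ^ p * Real.log r ^ q)
      (p * x ^ (p-1) * Real.log x ^ q + x ^ p * (x⁻¹ * q * Real.log x ^ (q-1))) x := by
  have hx0 : x ≠ 0 := by intro h; rw [h] at hx; linarith
  have hlog : Real.log x ≠ 0 := ne_of_gt (Real.log_pos hx)
  exact (Real.hasDerivAt_rpow_const (Or.inl hx0)).mul
    ((Real.hasDerivAt_log hx0).rpow_const (Or.inl hlog))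

private lemma aux_cont1 (p : ℝ) : ContinuousOn (fun r : ℝ => r ^ p) (Ioi 1) :=
  continuousOn_id.rpow_const fun x hx => Or.inl (ne_of_gt (lt_trans one_pos hx))

private lemma aux_cont2 (q : ℝ) : ContinuousOn (fun r : ℝ => Real.log r ^ q) (Ioi 1) :=
  (Real.continuousOn_log.mono fun x hx => ne_of_gt (lt_trans one_pos hx)).rpow_const
    fun x hx => Or.inl (ne_of_gt (Real.log_pos hx))

private lemma aux_contOn (p q : ℝ) :
    ContinuousOn (fun r : ℝ => r ^ p * Real.log r ^ q) (Ioi 1) :=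
  (aux_cont1 p).mul (aux_cont2 q)

private lemma aux_uIcc {x y : ℝ} (hx : 1 < x) (hy : 1 < y) : Set.uIcc x y ⊆ Ioi 1 :=
  fun r hr => lt_of_lt_of_le (lt_min hx hy) hr.1

private lemma aux_intg (p q : ℝ) {x y : ℝ} (hx : 1 < x) (hy : 1 < y) :
    IntervalIntegrable (fun r : ℝ => r ^ p * Real.log r ^ q) volume x y :=
  (((aux_contOn p q)).mono (aux_uIcc hx hy)).intervalIntegrable

private lemma aux_pos (p q : ℝ) {r : ℝ} (hr : 1 < r) : 0 < r ^ p * Real.log r ^ q :=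
  mul_pos (Real.rpow_pos_of_pos (lt_trans one_pos hr) _)
    (Real.rpow_pos_of_pos (Real.log_pos hr) _)

/-- `R^p (log R)^q → ∞` for `p > 0`. -/
private lemma aux_tendsto {p : ℝ} (q : ℝ) (hp : 0 < p) :
    Tendsto (fun R : ℝ => R ^ p * Real.log R ^ q) atTop atTop := by
  have key : ∀ᶠ R : ℝ in atTop, R ^ (p/2) ≤ R ^ p * Real.log R ^ q := by
    have h1 : ∀ᶠ R : ℝ in atTop, 1 ≤ R ^ (p/2) * Real.log R ^ q := by
      rcases le_or_gt 0 q with hq | hq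
      · filter_upwards [eventually_ge_atTop (Real.exp 1)] with R hR
        have h1R : (1:ℝ) < R := lt_of_lt_of_le (by
          have := Real.exp_one_gt_d9; linarith) hR
        have hlog : 1 ≤ Real.log R := by
          rw [Real.le_log_iff_exp_le (lt_trans one_pos h1R)]; exact hR
        have h2 : (1:ℝ) ≤ R ^ (p/2) := Real.one_le_rpow h1R.le (by linarith)
        have h3 : (1:ℝ) ≤ Real.log R ^ q := Real.one_le_rpow hlog hq
        nlinarith
      · have := (isLittleO_log_rpow_rpow_atTop (-q) (half_pos hp)).bound one_pos
        filter_upwards [this, eventually_ge_atTop (Real.exp 1)] with R hR hR'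
        have h1R : (1:ℝ) < R := lt_of_lt_of_le (by
          have := Real.exp_one_gt_d9; linarith) hR'
        have hlogpos : 0 < Real.log R := Real.log_pos h1R
        have h2 : Real.log R ^ (-q) ≤ R ^ (p/2) := by
          have := hR
          rwa [Real.norm_eq_abs, Real.norm_eq_abs, one_mul,
            abs_of_pos (Real.rpow_pos_of_pos hlogpos _),
            abs_of_pos (Real.rpow_pos_of_pos (lt_trans one_pos h1R) _)] at this
        have h3 : 0 < Real.log R ^ q := Real.rpow_pos_of_pos hlogpos _
        have h4 : Real.log R ^ (-q) * Real.log R ^ q = 1 := by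
          rw [← Real.rpow_add hlogpos, neg_add_cancel, Real.rpow_zero]
        nlinarith
    filter_upwards [h1, eventually_gt_atTop 0] with R h1 hR0
    have : R ^ p = R ^ (p/2) * R ^ (p/2) := by
      rw [← Real.rpow_add hR0]; ring_nf
    rw [this, mul_assoc]
    nlinarith [Real.rpow_pos_of_pos hR0 (p/2)]
  exact tendsto_atTop_mono' _ key (tendsto_rpow_atTop (half_pos hp))

/-- Eventually `1 ≤ r^a (log r)^b` under the standing hypotheses. -/
private lemma aux_one_le {a b : ℝ} (ha : 0 ≤ a) (hab : a = 0 → 0 ≤ b) :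
    ∀ᶠ r : ℝ in atTop, 1 ≤ r ^ a * Real.log r ^ b := by
  rcases eq_or_lt_of_le ha with ha0 | ha0
  · have hb := hab ha0.symm
    filter_upwards [eventually_ge_atTop (Real.exp 1)] with r hr
    have h1r : (1:ℝ) < r := lt_of_lt_of_le (by have := Real.exp_one_gt_d9; linarith) hr
    have hlog : 1 ≤ Real.log r := by
      rw [Real.le_log_iff_exp_le (lt_trans one_pos h1r)]; exact hr
    have h2 : (1:ℝ) ≤ r ^ a := Real.one_le_rpow h1r.le ha
    have h3 : (1:ℝ) ≤ Real.log r ^ b := Real.one_le_rpow hlog hb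
    nlinarith
  · exact (aux_tendsto b ha0).eventually_ge_atTop 1

private lemma aux_pi_gt_one : (1:ℝ) < π := by nlinarith [Real.pi_gt_three]

/-- `G(R) → ∞`. -/
private lemma aux_Gtop {a b : ℝ} (ha : 0 ≤ a) (hab : a = 0 → 0 ≤ b) :
    Tendsto (fun R : ℝ => ∫ r in π..R, r ^ a * Real.log r ^ b) atTop atTop := by
  have hπ1 := aux_pi_gt_one
  obtain ⟨r₂₀, hr₂₀⟩ := eventually_atTop.1 (aux_one_le ha hab)
  set r₂ := max r₂₀ π with hr₂def
  have h1r₂ : 1 < r₂ := lt_of_lt_of_le hπ1 (le_max_right _ _)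
  have key : ∀ᶠ R : ℝ in atTop, R - r₂ ≤ ∫ r in π..R, r ^ a * Real.log r ^ b := by
    filter_upwards [eventually_ge_atTop r₂] with R hR
    have h1R : 1 < R := lt_of_lt_of_le h1r₂ hR
    have hsplit : (∫ r in π..R, r ^ a * Real.log r ^ b) =
        (∫ r in π..r₂, r ^ a * Real.log r ^ b) + ∫ r in r₂..R, r ^ a * Real.log r ^ b :=
      (integral_add_adjacent_intervals (aux_intg a b hπ1 h1r₂) (aux_intg a b h1r₂ h1R)).symm
    have h1 : 0 ≤ ∫ r in π..r₂, r ^ a * Real.log r ^ b :=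
      integral_nonneg (le_trans (le_max_right _ _) le_rfl : π ≤ r₂)
        fun u hu => (aux_pos a b (lt_of_lt_of_le hπ1 hu.1)).le
    have h2 : R - r₂ ≤ ∫ r in r₂..R, r ^ a * Real.log r ^ b := by
      have := integral_mono_on (μ := volume) (f := fun _ : ℝ => (1:ℝ))
        (g := fun r : ℝ => r ^ a * Real.log r ^ b) (a := r₂) (b := R) hR
        intervalIntegrable_const (aux_intg a b h1r₂ h1R)
        (fun x hx => hr₂₀ x (le_trans (le_max_left _ _) hx.1))
      simpa using this
    linarith
  apply tendsto_atTop_mono' _ key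
  simpa [sub_eq_add_neg] using tendsto_atTop_add_const_right atTop (-r₂) tendsto_id

/-- `J =o G`. -/
private lemma aux_Jo {a b : ℝ} (ha : 0 ≤ a) (hab : a = 0 → 0 ≤ b) :
    (fun R : ℝ => ∫ r in π..R, r ^ a * Real.log r ^ (b-1)) =o[atTop]
      (fun R : ℝ => ∫ r in π..R, r ^ a * Real.log r ^ b) := by
  have hπ1 := aux_pi_gt_one
  have hGtop := aux_Gtop ha hab
  rw [isLittleO_iff]
  intro ε hε
  set r₁ := max π (Real.exp (2/ε)) with hr₁def
  have h1r₁ : 1 < r₁ := lt_of_lt_of_le hπ1 (le_max_left _ _)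
  have hπr₁ : π ≤ r₁ := le_max_left _ _
  -- pointwise bound for r ≥ r₁
  have hptw : ∀ r : ℝ, r₁ ≤ r → r ^ a * Real.log r ^ (b-1) ≤ ε/2 * (r ^ a * Real.log r ^ b) := by
    intro r hr
    have h1r : 1 < r := lt_of_lt_of_le h1r₁ hr
    have hLpos : 0 < Real.log r := Real.log_pos h1r
    have hL : 2/ε ≤ Real.log r := by
      rw [Real.le_log_iff_exp_le (lt_trans one_pos h1r)]
      exact le_trans (le_max_right _ _) hr
    have h5 : r ^ a * Real.log r ^ (b - 1) = r ^ a * Real.log r ^ b / Real.log r := by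
      rw [Real.rpow_sub hLpos, Real.rpow_one]; ring
    rw [h5, div_le_iff₀ hLpos]
    have hX : 0 < r ^ a * Real.log r ^ b := aux_pos a b h1r
    have h2 : 2 ≤ Real.log r * ε := (div_le_iff₀ hε).1 hL
    nlinarith [mul_le_mul_of_nonneg_left h2 hX.le]
  set C₁ := ∫ r in π..r₁, r ^ a * Real.log r ^ (b-1) with hC₁
  filter_upwards [eventually_ge_atTop r₁,
    hGtop.eventually_ge_atTop ((2/ε) * C₁), hGtop.eventually_ge_atTop 0] with R hR hG1 hG0
  have h1R : 1 < R := lt_of_lt_of_le h1r₁ hR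
  have hsplitJ : (∫ r in π..R, r ^ a * Real.log r ^ (b-1)) =
      C₁ + ∫ r in r₁..R, r ^ a * Real.log r ^ (b-1) :=
    (integral_add_adjacent_intervals (aux_intg a (b-1) hπ1 h1r₁) (aux_intg a (b-1) h1r₁ h1R)).symm
  have hsplitG : (∫ r in π..R, r ^ a * Real.log r ^ b) =
      (∫ r in π..r₁, r ^ a * Real.log r ^ b) + ∫ r in r₁..R, r ^ a * Real.log r ^ b :=
    (integral_add_adjacent_intervals (aux_intg a b hπ1 h1r₁) (aux_intg a b h1r₁ h1R)).symm
  have hG2nn : 0 ≤ ∫ r in π..r₁, r ^ a * Real.log r ^ b :=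
    integral_nonneg hπr₁ fun u hu => (aux_pos a b (lt_of_lt_of_le hπ1 hu.1)).le
  have htail : (∫ r in r₁..R, r ^ a * Real.log r ^ (b-1)) ≤
      ε/2 * ∫ r in r₁..R, r ^ a * Real.log r ^ b := by
    have := integral_mono_on (μ := volume)
      (f := fun r : ℝ => r ^ a * Real.log r ^ (b-1))
      (g := fun r : ℝ => ε/2 * (r ^ a * Real.log r ^ b)) (a := r₁) (b := R) hR
      (aux_intg a (b-1) h1r₁ h1R) ((aux_intg a b h1r₁ h1R).const_mul _)
      (fun x hx => hptw x hx.1)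
    rwa [intervalIntegral.integral_const_mul] at this
  have hJnn : 0 ≤ ∫ r in π..R, r ^ a * Real.log r ^ (b-1) :=
    integral_nonneg (le_trans hπr₁ hR)
      fun u hu => (aux_pos a (b-1) (lt_of_lt_of_le hπ1 hu.1)).le
  rw [Real.norm_eq_abs, Real.norm_eq_abs, abs_of_nonneg hJnn, abs_of_nonneg hG0]
  have hε2 : (0:ℝ) ≤ ε/2 := by linarith
  have hC₁le : C₁ ≤ ε/2 * ∫ r in π..R, r ^ a * Real.log r ^ b := by
    have heq : ε/2 * (2/ε * C₁) = C₁ := by field_simp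
    nlinarith [mul_le_mul_of_nonneg_left hG1 hε2]
  have htail2 : (∫ r in r₁..R, r ^ a * Real.log r ^ b) ≤ ∫ r in π..R, r ^ a * Real.log r ^ b := by
    rw [hsplitG]; linarith
  calc (∫ r in π..R, r ^ a * Real.log r ^ (b-1))
      = C₁ + ∫ r in r₁..R, r ^ a * Real.log r ^ (b-1) := hsplitJ
    _ ≤ ε/2 * (∫ r in π..R, r ^ a * Real.log r ^ b)
        + ε/2 * (∫ r in π..R, r ^ a * Real.log r ^ b) := by
        refine add_le_add hC₁le (le_trans htail ?_)
        exact mul_le_mul_of_nonneg_left htail2 hε2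
    _ = ε * ∫ r in π..R, r ^ a * Real.log r ^ b := by ring

private lemma aux_contD (p q : ℝ) :
    ContinuousOn (fun x : ℝ =>
      p * x ^ (p-1) * Real.log x ^ q + x ^ p * (x⁻¹ * q * Real.log x ^ (q-1))) (Ioi 1) := by
  have hinv : ContinuousOn (fun x : ℝ => x⁻¹) (Ioi 1) :=
    continuousOn_id.inv₀ fun x hx => ne_of_gt (lt_trans one_pos hx)
  exact ((continuousOn_const.mul (aux_cont1 (p-1))).mul (aux_cont2 q)).add
    ((aux_cont1 p).mul ((hinv.mul continuousOn_const).mul (aux_cont2 (q-1))))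

private lemma aux_intgD (p q : ℝ) {x y : ℝ} (hx : 1 < x) (hy : 1 < y) :
    IntervalIntegrable (fun r : ℝ =>
      p * r ^ (p-1) * Real.log r ^ q + r ^ p * (r⁻¹ * q * Real.log r ^ (q-1))) volume x y :=
  ((aux_contD p q).mono (aux_uIcc hx hy)).intervalIntegrable

/-- FTC step: `H R - H π = G R + (b/(a+1)) * J R` for `R ≥ π`. -/
private lemma aux_ftc {a : ℝ} (b : ℝ) (ha : 0 ≤ a) {R : ℝ} (hR : π ≤ R) :
    R ^ (a+1) * Real.log R ^ b / (a+1) - π ^ (a+1) * Real.log π ^ b / (a+1)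
      = (∫ r in π..R, r ^ a * Real.log r ^ b)
        + (b/(a+1)) * ∫ r in π..R, r ^ a * Real.log r ^ (b-1) := by
  have hπ1 := aux_pi_gt_one
  have h1R : 1 < R := lt_of_lt_of_le hπ1 hR
  have ha1 : (0:ℝ) < a + 1 := by linarith
  have hder : ∀ x ∈ Set.uIcc π R, HasDerivAt
      (fun y : ℝ => y ^ (a+1) * Real.log y ^ b / (a+1))
      ((((a+1) * x ^ ((a+1)-1) * Real.log x ^ b
        + x ^ (a+1) * (x⁻¹ * b * Real.log x ^ (b-1)))) / (a+1)) x := by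
    intro x hx
    exact (aux_hasDeriv (a+1) b (aux_uIcc hπ1 h1R hx)).div_const (a+1)
  have hint : IntervalIntegrable (fun x : ℝ =>
      (((a+1) * x ^ ((a+1)-1) * Real.log x ^ b
        + x ^ (a+1) * (x⁻¹ * b * Real.log x ^ (b-1)))) / (a+1)) volume π R :=
    (aux_intgD (a+1) b hπ1 h1R).div_const _
  have hftc := integral_eq_sub_of_hasDerivAt hder hint
  -- rewrite the integrand on the interval
  have hcongr : (∫ x in π..R, (((a+1) * x ^ ((a+1)-1) * Real.log x ^ b
        + x ^ (a+1) * (x⁻¹ * b * Real.log x ^ (b-1)))) / (a+1))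
      = ∫ x in π..R, (x ^ a * Real.log x ^ b + (b/(a+1)) * (x ^ a * Real.log x ^ (b-1))) := by
    apply integral_congr
    intro x hx
    have h1x : 1 < x := aux_uIcc hπ1 h1R hx
    have hx0 : x ≠ 0 := ne_of_gt (lt_trans one_pos h1x)
    have e1 : x ^ ((a+1)-1) = x ^ a := by norm_num
    have e2 : x ^ (a+1) * x⁻¹ = x ^ a := by
      rw [Real.rpow_add_one hx0]
      field_simp
    simp only
    rw [e1, Real.rpow_add_one hx0]
    field_simp
  have hadd : (∫ x in π..R, (x ^ a * Real.log x ^ b + (b/(a+1)) * (x ^ a * Real.log x ^ (b-1))))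
      = (∫ r in π..R, r ^ a * Real.log r ^ b)
        + (b/(a+1)) * ∫ r in π..R, r ^ a * Real.log r ^ (b-1) := by
    rw [integral_add (aux_intg a b hπ1 h1R) ((aux_intg a (b-1) hπ1 h1R).const_mul _),
      intervalIntegral.integral_const_mul]
  rw [← hadd, ← hcongr, hftc]

/-- `G ~ H`. -/
private lemma aux_equiv {a b : ℝ} (ha : 0 ≤ a) (hab : a = 0 → 0 ≤ b) :
    (fun R : ℝ => ∫ r in π..R, r ^ a * Real.log r ^ b) ~[atTop]
      (fun R : ℝ => R ^ (a+1) * Real.log R ^ b / (a+1)) := by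
  have hGtop := aux_Gtop ha hab
  have hnorm : Tendsto (fun x : ℝ => ‖∫ r in π..x, r ^ a * Real.log r ^ b‖) atTop atTop := by
    simpa [Real.norm_eq_abs, Function.comp_def] using tendsto_abs_atTop_atTop.comp hGtop
  have o1 : (fun _ : ℝ => -(π ^ (a+1) * Real.log π ^ b / (a+1))) =o[atTop]
      (fun R : ℝ => ∫ r in π..R, r ^ a * Real.log r ^ b) :=
    isLittleO_const_left.2 (Or.inr hnorm)
  have o2 : (fun R : ℝ => (b/(a+1)) * ∫ r in π..R, r ^ a * Real.log r ^ (b-1)) =o[atTop]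
      (fun R : ℝ => ∫ r in π..R, r ^ a * Real.log r ^ b) :=
    (aux_Jo ha hab).const_mul_left _
  have key : ∀ᶠ R : ℝ in atTop,
      (∫ r in π..R, r ^ a * Real.log r ^ b) - R ^ (a+1) * Real.log R ^ b / (a+1)
      = -(π ^ (a+1) * Real.log π ^ b / (a+1))
        - (b/(a+1)) * ∫ r in π..R, r ^ a * Real.log r ^ (b-1) := by
    filter_upwards [eventually_ge_atTop π] with R hR
    have := aux_ftc b ha hR
    linarith
  have o3 : (fun R : ℝ => (∫ r in π..R, r ^ a * Real.log r ^ b)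
      - R ^ (a+1) * Real.log R ^ b / (a+1)) =o[atTop]
      (fun R : ℝ => ∫ r in π..R, r ^ a * Real.log r ^ b) :=
    (o1.sub o2).congr' (EventuallyEq.symm key) EventuallyEq.rfl
  have o4 : (fun R : ℝ => R ^ (a+1) * Real.log R ^ b / (a+1)
      - ∫ r in π..R, r ^ a * Real.log r ^ b) =o[atTop]
      (fun R : ℝ => ∫ r in π..R, r ^ a * Real.log r ^ b) := by
    have := o3.neg_left
    refine this.congr' (Eventually.of_forall fun R => ?_) EventuallyEq.rfl
    ring
  exact (IsEquivalent.symm o4)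

/-- `h =o[atTop] H`. -/
private lemma aux_h_littleo {a : ℝ} (b : ℝ) (ha : 0 ≤ a) :
    (fun R : ℝ => R ^ a * Real.log R ^ b) =o[atTop]
      (fun R : ℝ => R ^ (a+1) * Real.log R ^ b / (a+1)) := by
  have ha1 : (0:ℝ) < a + 1 := by linarith
  have o_mul : (fun R : ℝ => (a+1) * R⁻¹) =o[atTop] (fun _ : ℝ => (1:ℝ)) := by
    rw [isLittleO_one_iff]
    simpa using tendsto_inv_atTop_zero.const_mul (a+1)
  have o1 := o_mul.mul_isBigO
    (isBigO_refl (fun R : ℝ => R ^ (a+1) * Real.log R ^ b / (a+1)) atTop)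
  refine o1.congr' ?_ (Eventually.of_forall fun x => one_mul _)
  filter_upwards [eventually_gt_atTop 1] with R h1R
  have hR0 : R ≠ 0 := ne_of_gt (lt_trans one_pos h1R)
  simp only [Real.rpow_add_one hR0]
  field_simp

/-- the oscillatory part is negligible. -/
private lemma aux_osc {a b : ℝ} (ha : 0 ≤ a) (hab : a = 0 → 0 ≤ b)
    (P : ℝ → ℝ) (hP_cont : Continuous P) (hP_per : ∀ r, P (r + π) = P r) :
    (fun R : ℝ => ∫ r in π..R,
        (r ^ a * Real.log r ^ b) * (P r - (∫ r in (0:ℝ)..π, P r) / π)) =o[atTop]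
      (fun R : ℝ => R ^ (a+1) * Real.log R ^ b / (a+1)) := by
  have hπ1 := aux_pi_gt_one
  have hπ0 : (0:ℝ) < π := pi_pos
  have ha1 : (0:ℝ) < a + 1 := by linarith
  set c : ℝ := ∫ r in (0:ℝ)..π, P r with hc_def
  set Q : ℝ → ℝ := fun r => P r - c / π with hQ_def
  have hQcont : Continuous Q := hP_cont.sub continuous_const
  have hQper : Function.Periodic Q π := by
    intro x; simp only [hQ_def, hP_per x]
  have hQint0 : (∫ r in (0:ℝ)..π, Q r) = 0 := by
    rw [hQ_def]
    rw [integral_sub (hP_cont.intervalIntegrable _ _) (intervalIntegrable_const)]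
    simp only [intervalIntegral.integral_const, smul_eq_mul, sub_zero]
    field_simp
    exact sub_eq_zero.2 hc_def.symm
  set S : ℝ → ℝ := fun x => ∫ r in π..x, Q r with hS_def
  have hScont : Continuous S :=
    intervalIntegral.continuous_primitive (fun x y => hQcont.intervalIntegrable x y) π
  have hSper : Function.Periodic S π := by
    intro x
    have h1 : S (x + π) = S x + ∫ r in x..x+π, Q r := by
      rw [hS_def]
      exact (integral_add_adjacent_intervals (hQcont.intervalIntegrable _ _)
        (hQcont.intervalIntegrable _ _)).symm
    have h2 : (∫ r in x..x+π, Q r) = ∫ r in (0:ℝ)..(0+π), Q r :=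
      hQper.intervalIntegral_add_eq x 0
    rw [h1, h2, zero_add, hQint0, add_zero]
  obtain ⟨M, hM⟩ := isBounded_iff_forall_norm_le.1
    (hSper.isBounded_of_continuous Real.pi_ne_zero hScont)
  have hM' : ∀ x, |S x| ≤ M := fun x => by
    have := hM (S x) (mem_range_self x); rwa [Real.norm_eq_abs] at this
  have hM0 : 0 ≤ M := le_trans (abs_nonneg _) (hM' 0)
  -- derivative of h
  set d : ℝ → ℝ := fun x =>
    a * x ^ (a-1) * Real.log x ^ b + x ^ a * (x⁻¹ * b * Real.log x ^ (b-1)) with hd_def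
  -- choose r₀ ≥ π beyond which d ≥ 0
  obtain ⟨r₀, hr₀π, hr₀⟩ : ∃ r₀, π ≤ r₀ ∧ ∀ r, r₀ ≤ r → 0 ≤ d r := by
    rcases le_or_gt 0 b with hb | hb
    · refine ⟨π, le_rfl, fun r hr => ?_⟩
      have h1r : 1 < r := lt_of_lt_of_le hπ1 hr
      have hr0 : (0:ℝ) < r := lt_trans one_pos h1r
      have hL : 0 < Real.log r := Real.log_pos h1r
      have t1 : 0 ≤ a * r ^ (a-1) * Real.log r ^ b :=
        mul_nonneg (mul_nonneg ha (Real.rpow_pos_of_pos hr0 _).le)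
          (Real.rpow_pos_of_pos hL _).le
      have t2 : 0 ≤ r ^ a * (r⁻¹ * b * Real.log r ^ (b-1)) :=
        mul_nonneg (Real.rpow_pos_of_pos hr0 _).le
          (mul_nonneg (mul_nonneg (inv_nonneg.2 hr0.le) hb) (Real.rpow_pos_of_pos hL _).le)
      exact add_nonneg t1 t2
    · have ha0 : 0 < a := by
        rcases eq_or_lt_of_le ha with h | h
        · exact absurd (hab h.symm) (not_le.2 hb)
        · exact h
      refine ⟨max π (Real.exp (-b/a)), le_max_left _ _, fun r hr => ?_⟩
      have h1r : 1 < r := lt_of_lt_of_le hπ1 (le_trans (le_max_left _ _) hr)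
      have hr0 : (0:ℝ) < r := lt_trans one_pos h1r
      have hr0' : r ≠ 0 := ne_of_gt hr0
      have hL : 0 < Real.log r := Real.log_pos h1r
      have hLb : -b/a ≤ Real.log r := by
        rw [Real.le_log_iff_exp_le hr0]
        exact le_trans (le_max_right _ _) hr
      have haL : -b ≤ a * Real.log r := by
        rw [div_le_iff₀ ha0] at hLb; linarith [mul_comm (Real.log r) a]
      have e1 : r ^ a * r⁻¹ = r ^ (a-1) := by
        rw [Real.rpow_sub_one hr0']; rw [div_eq_mul_inv]
      have e2 : Real.log r ^ b = Real.log r ^ (b-1) * Real.log r := by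
        rw [Real.rpow_sub_one (ne_of_gt hL)]; field_simp
      have hpos1 : 0 < r ^ (a-1) := Real.rpow_pos_of_pos hr0 _
      have hpos2 : 0 < Real.log r ^ (b-1) := Real.rpow_pos_of_pos hL _
      have : d r = r ^ (a-1) * Real.log r ^ (b-1) * (a * Real.log r + b) := by
        rw [hd_def]; simp only
        rw [e2, ← e1]; ring
      rw [this]
      have : 0 ≤ a * Real.log r + b := by linarith
      positivity
  -- integration by parts bound
  have key : ∀ R, r₀ ≤ R → |∫ r in π..R, (r ^ a * Real.log r ^ b) * Q r| ≤
      (M * ∫ r in π..r₀, |d r|) + 2 * M * (R ^ a * Real.log R ^ b) := by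
    intro R hR
    have hπR : π ≤ R := le_trans hr₀π hR
    have h1R : 1 < R := lt_of_lt_of_le hπ1 hπR
    have h1r₀ : 1 < r₀ := lt_of_lt_of_le hπ1 hr₀π
    -- IBP
    have hibp : (∫ r in π..R, (r ^ a * Real.log r ^ b) * Q r)
        = (R ^ a * Real.log R ^ b) * S R - (π ^ a * Real.log π ^ b) * S π
          - ∫ r in π..R, d r * S r := by
      have hu : ∀ x ∈ Set.uIcc π R, HasDerivAt (fun r : ℝ => r ^ a * Real.log r ^ b) (d x) x :=
        fun x hx => aux_hasDeriv a b (aux_uIcc hπ1 h1R hx)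
      have hv : ∀ x ∈ Set.uIcc π R, HasDerivAt S (Q x) x :=
        fun x _ => (hQcont.integral_hasStrictDerivAt π x).hasDerivAt
      exact integral_mul_deriv_eq_deriv_mul hu hv (aux_intgD a b hπ1 h1R)
        (hQcont.intervalIntegrable _ _)
    have hSπ : S π = 0 := integral_same
    -- bound the remaining integral
    have hcontdS : ContinuousOn (fun r : ℝ => |d r * S r|) (Set.uIcc π R) :=
      (((aux_contD a b).mono (aux_uIcc hπ1 h1R)).mul hScont.continuousOn).abs
    have habs : |∫ r in π..R, d r * S r| ≤ ∫ r in π..R, |d r * S r| :=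
      abs_integral_le_integral_abs hπR
    have hmono : (∫ r in π..R, |d r * S r|) ≤ ∫ r in π..R, |d r| * M := by
      apply integral_mono_on hπR hcontdS.intervalIntegrable
        ((((aux_contD a b).mono (aux_uIcc hπ1 h1R)).abs.mul continuousOn_const).intervalIntegrable)
      intro x _
      rw [abs_mul]
      exact mul_le_mul_of_nonneg_left (hM' x) (abs_nonneg _)
    have hsplit : (∫ r in π..R, |d r| * M)
        = (∫ r in π..r₀, |d r| * M) + ∫ r in r₀..R, |d r| * M := by
      refine (integral_add_adjacent_intervals ?_ ?_).symm
      · exact (((aux_contD a b).mono (aux_uIcc hπ1 h1r₀)).abs.mul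
          continuousOn_const).intervalIntegrable
      · exact (((aux_contD a b).mono (aux_uIcc h1r₀ h1R)).abs.mul
          continuousOn_const).intervalIntegrable
    have htail : (∫ r in r₀..R, |d r| * M) = M * ∫ r in r₀..R, d r := by
      rw [← intervalIntegral.integral_const_mul]
      apply integral_congr
      intro x hx
      have : 0 ≤ d x := hr₀ x (le_trans (le_of_eq (min_eq_left hR).symm) hx.1)
      simp only [abs_of_nonneg this]; ring
    have hftc : (∫ r in r₀..R, d r) = R ^ a * Real.log R ^ b - r₀ ^ a * Real.log r₀ ^ b := by
      apply integral_eq_sub_of_hasDerivAt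
      · exact fun x hx => aux_hasDeriv a b (aux_uIcc h1r₀ h1R hx)
      · exact aux_intgD a b h1r₀ h1R
    have hhr₀pos : 0 < r₀ ^ a * Real.log r₀ ^ b := aux_pos a b h1r₀
    have hhRpos : 0 < R ^ a * Real.log R ^ b := aux_pos a b h1R
    have hconst : (∫ r in π..r₀, |d r| * M) = M * ∫ r in π..r₀, |d r| := by
      rw [← intervalIntegral.integral_const_mul]
      apply integral_congr; intro x _; simp only [mul_comm]
    have hSR : |S R| ≤ M := hM' R
    calc |∫ r in π..R, (r ^ a * Real.log r ^ b) * Q r|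
        = |(R ^ a * Real.log R ^ b) * S R - (∫ r in π..R, d r * S r)| := by
          rw [hibp, hSπ]; ring_nf
      _ ≤ |(R ^ a * Real.log R ^ b) * S R| + |∫ r in π..R, d r * S r| := abs_sub _ _
      _ ≤ (R ^ a * Real.log R ^ b) * M + ((∫ r in π..r₀, |d r| * M) + M * ∫ r in r₀..R, d r) := by
          refine add_le_add ?_ ?_
          · rw [abs_mul, abs_of_pos hhRpos]
            exact mul_le_mul_of_nonneg_left hSR hhRpos.le
          · refine le_trans habs (le_trans hmono ?_)
            rw [hsplit, htail]
      _ ≤ (M * ∫ r in π..r₀, |d r|) + 2 * M * (R ^ a * Real.log R ^ b) := by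
          rw [hconst, hftc]
          nlinarith
  -- conclude littleo
  have o_h := aux_h_littleo b ha
  have hHtop : Tendsto (fun R : ℝ => R ^ (a+1) * Real.log R ^ b / (a+1)) atTop atTop :=
    (aux_tendsto b ha1).atTop_div_const ha1
  have hnorm : Tendsto (fun R : ℝ => ‖R ^ (a+1) * Real.log R ^ b / (a+1)‖) atTop atTop := by
    simpa only [Real.norm_eq_abs, Function.comp_def] using tendsto_abs_atTop_atTop.comp hHtop
  have o_const : (fun _ : ℝ => (M * ∫ r in π..r₀, |d r|)) =o[atTop]
      (fun R : ℝ => R ^ (a+1) * Real.log R ^ b / (a+1)) :=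
    isLittleO_const_left.2 (Or.inr hnorm)
  have o_bound : (fun R : ℝ => (M * ∫ r in π..r₀, |d r|) + 2 * M * (R ^ a * Real.log R ^ b))
      =o[atTop] (fun R : ℝ => R ^ (a+1) * Real.log R ^ b / (a+1)) :=
    o_const.add (o_h.const_mul_left _)
  refine IsBigO.trans_isLittleO ?_ o_bound
  rw [isBigO_iff]
  refine ⟨1, ?_⟩
  filter_upwards [eventually_ge_atTop r₀] with R hR
  have h1R : 1 < R := lt_of_lt_of_le hπ1 (le_trans hr₀π hR)
  have h1 := key R hR
  have hC₀ : 0 ≤ ∫ r in π..r₀, |d r| :=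
    integral_nonneg hr₀π fun u _ => abs_nonneg _
  have hpos : 0 ≤ (M * ∫ r in π..r₀, |d r|) + 2 * M * (R ^ a * Real.log R ^ b) := by
    have := aux_pos a b h1R
    positivity
  rw [Real.norm_eq_abs, Real.norm_eq_abs, one_mul, abs_of_nonneg hpos]
  exact h1

/-- For a positive continuous `π`-periodic function `P` and constants `a ≥ 0`, `b ∈ ℝ`
(with `b ≥ 0` when `a = 0`),
`∫_π^R r^a (log r)^b P(r) dr ∼ R^{a+1}(log R)^b/(π(a+1)) · ∫_0^π P(r) dr` as `R → ∞`. -/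
theorem stmt5 (P : ℝ → ℝ) (hP_cont : Continuous P) (hP_pos : ∀ r, 0 < P r)
    (hP_per : ∀ r, P (r + π) = P r)
    (a b : ℝ) (ha : 0 ≤ a) (hab : a = 0 → 0 ≤ b) :
    Tendsto (fun R => (∫ r in π..R, r ^ a * Real.log r ^ b * P r) /
        (R ^ (a+1) * Real.log R ^ b / (π * (a+1)) * ∫ r in (0:ℝ)..π, P r))
      atTop (nhds 1) := by
  have hπ1 := aux_pi_gt_one
  have hπ0 : (0:ℝ) < π := pi_pos
  have ha1 : (0:ℝ) < a + 1 := by linarith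
  set c : ℝ := ∫ r in (0:ℝ)..π, P r with hc_def
  have hc : 0 < c :=
    intervalIntegral_pos_of_pos (hP_cont.intervalIntegrable _ _) hP_pos hπ0
  -- the two main estimates
  have hequiv := aux_equiv ha hab
  have hosc := aux_osc ha hab P hP_cont hP_per
  -- denominator identity
  have hDev : ∀ R : ℝ, R ^ (a+1) * Real.log R ^ b / (π * (a+1)) * c
      = (c/π) * (R ^ (a+1) * Real.log R ^ b / (a+1)) := by
    intro R; field_simp
  -- splitting of the numerator
  have hsplit : ∀ᶠ R : ℝ in atTop,
      (∫ r in π..R, r ^ a * Real.log r ^ b * P r)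
        - R ^ (a+1) * Real.log R ^ b / (π * (a+1)) * c
      = (c/π) * ((∫ r in π..R, r ^ a * Real.log r ^ b)
            - R ^ (a+1) * Real.log R ^ b / (a+1))
        + ∫ r in π..R, (r ^ a * Real.log r ^ b) * (P r - c / π) := by
    filter_upwards [eventually_ge_atTop π] with R hR
    have h1R : 1 < R := lt_of_lt_of_le hπ1 hR
    have hi1 : IntervalIntegrable (fun r : ℝ => (c/π) * (r ^ a * Real.log r ^ b)) volume π R :=
      (aux_intg a b hπ1 h1R).const_mul _
    have hi2 : IntervalIntegrable
        (fun r : ℝ => (r ^ a * Real.log r ^ b) * (P r - c / π)) volume π R :=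
      (((aux_contOn a b).mono (aux_uIcc hπ1 h1R)).mul
        (hP_cont.sub continuous_const).continuousOn).intervalIntegrable
    have hnum : (∫ r in π..R, r ^ a * Real.log r ^ b * P r)
        = (c/π) * (∫ r in π..R, r ^ a * Real.log r ^ b)
          + ∫ r in π..R, (r ^ a * Real.log r ^ b) * (P r - c / π) := by
      rw [← intervalIntegral.integral_const_mul, ← integral_add hi1 hi2]
      apply integral_congr
      intro x _
      simp only
      ring
    rw [hnum, hDev R]
    ring
  -- (F - D) =o H
  have o1 : (fun R : ℝ => (∫ r in π..R, r ^ a * Real.log r ^ b * P r)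
      - R ^ (a+1) * Real.log R ^ b / (π * (a+1)) * c) =o[atTop]
      (fun R : ℝ => R ^ (a+1) * Real.log R ^ b / (a+1)) := by
    refine IsLittleO.congr' ?_ (EventuallyEq.symm hsplit) EventuallyEq.rfl
    exact (hequiv.isLittleO.const_mul_left (c/π)).add hosc
  -- H =O D
  have o2 : (fun R : ℝ => R ^ (a+1) * Real.log R ^ b / (a+1)) =O[atTop]
      (fun R : ℝ => R ^ (a+1) * Real.log R ^ b / (π * (a+1)) * c) := by
    rw [isBigO_iff]
    refine ⟨π/c, Eventually.of_forall fun R => ?_⟩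
    rw [hDev R, Real.norm_eq_abs, Real.norm_eq_abs, abs_mul,
      abs_of_pos (div_pos hc hπ0)]
    rw [← mul_assoc]
    have h4 : π / c * (c / π) = 1 := by field_simp
    rw [h4, one_mul]
  have main : (fun R : ℝ => ∫ r in π..R, r ^ a * Real.log r ^ b * P r) ~[atTop]
      (fun R : ℝ => R ^ (a+1) * Real.log R ^ b / (π * (a+1)) * c) :=
    o1.trans_isBigO o2
  have hz : ∀ᶠ R : ℝ in atTop, R ^ (a+1) * Real.log R ^ b / (π * (a+1)) * c ≠ 0 := by
    filter_upwards [eventually_gt_atTop 1] with R h1R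
    have h1 : 0 < R ^ (a+1) := Real.rpow_pos_of_pos (lt_trans one_pos h1R) _
    have h2 : 0 < Real.log R ^ b := Real.rpow_pos_of_pos (Real.log_pos h1R) _
    have h3 : 0 < π * (a+1) := mul_pos hπ0 ha1
    positivity
  exact (isEquivalent_iff_tendsto_one hz).1 main
end

section
/- Let $H : \mathbb{R}^6 \to \mathbb{R}^6$ be defined by $H(z) = (z_1, z_2, z_3, z_5, z_1 z_3 + z_2 z_4, z_1 z_5 + z_2 z_6 + z_3^2 + z_4^2)$. Then on the open set $\{z \in \mathbb{R}^6 : z_2 \ne 0\}$, $H$ is a bijection onto $\{z : z_2 \ne 0\}$ with inverse $H^{-1}(z) = \left(z_1, z_2, z_3, \frac{z_5 - z_1 z_3}{z_2}, z_4, -\frac{(z_5 - z_1 z_3)^2}{z_2^3} - \frac{z_1 z_4 + z_3^2 - z_6}{z_2}\right)$, and the Jacobian determinant of $H^{-1}$ at $z$ equals $-z_2^{-2}$. -/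
set_option maxRecDepth 8000
set_option maxHeartbeats 1600000


private lemma vec6_five {α : Type*} (a b c d e f : α) : ![a,b,c,d,e,f] 5 = f := rfl

/-- The map `H(z) = (z₁, z₂, z₃, z₅, z₁z₃ + z₂z₄, z₁z₅ + z₂z₆ + z₃² + z₄²)` on `ℝ⁶`
(indices shifted down by one). -/
def Hmap (z : Fin 6 → ℝ) : Fin 6 → ℝ :=
  ![z 0, z 1, z 2, z 4, z 0 * z 2 + z 1 * z 3,
    z 0 * z 4 + z 1 * z 5 + (z 2)^2 + (z 3)^2]

/-- The explicit inverse of `Hmap` on `{z₂ ≠ 0}`. -/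
noncomputable def Hinv (z : Fin 6 → ℝ) : Fin 6 → ℝ :=
  ![z 0, z 1, z 2, (z 4 - z 0 * z 2) / z 1, z 3,
    -((z 4 - z 0 * z 2)^2 / (z 1)^3) - (z 0 * z 3 + (z 2)^2 - z 5) / z 1]

/-- The Jacobian matrix of `Hinv`. -/
noncomputable def Jmat (z : Fin 6 → ℝ) : Matrix (Fin 6) (Fin 6) ℝ :=
  !![1,0,0,0,0,0;
     0,1,0,0,0,0;
     0,0,1,0,0,0;
     -(z 2)/(z 1), -(z 4 - z 0 * z 2)/(z 1)^2, -(z 0)/(z 1), 0, 1/(z 1), 0;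
     0,0,0,1,0,0;
     2*(z 2)*(z 4 - z 0 * z 2)/(z 1)^3 - (z 3)/(z 1),
     3*(z 4 - z 0 * z 2)^2/(z 1)^4 + (z 0 * z 3 + (z 2)^2 - z 5)/(z 1)^2,
     2*(z 0)*(z 4 - z 0 * z 2)/(z 1)^3 - 2*(z 2)/(z 1),
     -(z 0)/(z 1),
     -2*(z 4 - z 0 * z 2)/(z 1)^3,
     1/(z 1)]

lemma Jmat_det (z : Fin 6 → ℝ) (hz : z 1 ≠ 0) : (Jmat z).det = -((z 1)^2)⁻¹ := by
  simp [Jmat, Matrix.det_succ_row_zero, Fin.sum_univ_succ]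
  field_simp

lemma hinv_hmap (z : Fin 6 → ℝ) (hz : z 1 ≠ 0) : Hinv (Hmap z) = z := by
  funext i
  fin_cases i <;> simp [Hmap, Hinv, vec6_five] <;> field_simp <;> ring

lemma hmap_hinv (z : Fin 6 → ℝ) (hz : z 1 ≠ 0) : Hmap (Hinv z) = z := by
  funext i
  fin_cases i <;> simp [Hmap, Hinv, vec6_five] <;> field_simp <;> ring

lemma hinv_hasFDerivAt (z : Fin 6 → ℝ) (hz : z 1 ≠ 0) :
    HasFDerivAt Hinv (LinearMap.toContinuousLinearMap (Matrix.toLin' (Jmat z))) z := by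
  set D := LinearMap.toContinuousLinearMap (Matrix.toLin' (Jmat z)) with hD
  rw [hasFDerivAt_pi']
  have hp : ∀ j : Fin 6, HasFDerivAt (fun z : Fin 6 → ℝ => z j)
      (ContinuousLinearMap.proj (R := ℝ) (φ := fun _ : Fin 6 => ℝ) j) z :=
    fun j => hasFDerivAt_apply j z
  have hinv1 : HasFDerivAt (fun x : Fin 6 → ℝ => (x 1)⁻¹)
      ((-((z 1) ^ 2)⁻¹) • ContinuousLinearMap.proj (R := ℝ) (φ := fun _ : Fin 6 => ℝ) 1) z :=
    (hasDerivAt_inv hz).comp_hasFDerivAt z (hp 1)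
  intro i
  fin_cases i
  · show HasFDerivAt (fun x : Fin 6 → ℝ => x 0) _ z
    refine (hp 0).congr_fderiv ?_
    ext v
    simp [hD, Matrix.toLin'_apply, Matrix.mulVec, dotProduct, Fin.sum_univ_six, Jmat, vec6_five]
  · show HasFDerivAt (fun x : Fin 6 → ℝ => x 1) _ z
    refine (hp 1).congr_fderiv ?_
    ext v
    simp [hD, Matrix.toLin'_apply, Matrix.mulVec, dotProduct, Fin.sum_univ_six, Jmat, vec6_five]
  · show HasFDerivAt (fun x : Fin 6 → ℝ => x 2) _ z
    refine (hp 2).congr_fderiv ?_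
    ext v
    simp [hD, Matrix.toLin'_apply, Matrix.mulVec, dotProduct, Fin.sum_univ_six, Jmat, vec6_five]
  · have h : HasFDerivAt (fun x : Fin 6 → ℝ => (x 4 - x 0 * x 2) * (x 1)⁻¹) _ z :=
      ((hp 4).sub ((hp 0).mul (hp 2))).mul hinv1
    refine HasFDerivAt.congr_of_eventuallyEq (h.congr_fderiv ?_)
      (Filter.Eventually.of_forall fun x => ?_)
    · ext v
      simp [hD, Matrix.toLin'_apply, Matrix.mulVec, dotProduct, Fin.sum_univ_six, Jmat, vec6_five]
      field_simp
      ring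
    · show Hinv x 3 = _
      simp [Hinv, vec6_five]
      ring
  · show HasFDerivAt (fun x : Fin 6 → ℝ => x 3) _ z
    refine (hp 3).congr_fderiv ?_
    ext v
    simp [hD, Matrix.toLin'_apply, Matrix.mulVec, dotProduct, Fin.sum_univ_six, Jmat, vec6_five]
  · have h : HasFDerivAt (fun x : Fin 6 → ℝ =>
        -((x 4 - x 0 * x 2) * (x 4 - x 0 * x 2) * ((x 1)⁻¹ * (x 1)⁻¹ * (x 1)⁻¹)) -
          (x 0 * x 3 + x 2 * x 2 - x 5) * (x 1)⁻¹) _ z :=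
      ((((hp 4).sub ((hp 0).mul (hp 2))).mul ((hp 4).sub ((hp 0).mul (hp 2)))).mul
        ((hinv1.mul hinv1).mul hinv1)).neg.sub
        (((((hp 0).mul (hp 3)).add ((hp 2).mul (hp 2))).sub (hp 5)).mul hinv1)
    refine HasFDerivAt.congr_of_eventuallyEq (h.congr_fderiv ?_)
      (Filter.Eventually.of_forall fun x => ?_)
    · ext v
      simp [hD, Matrix.toLin'_apply, Matrix.mulVec, dotProduct, Fin.sum_univ_six, Jmat, vec6_five]
      field_simp
      ring
    · show Hinv x 5 = _
      simp [Hinv, vec6_five]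
      ring

/-- `Hmap` is a bijection of `{z : z₂ ≠ 0}` onto itself with inverse `Hinv`, and the
Jacobian determinant of `Hinv` at any point `z` with `z₂ ≠ 0` equals `-z₂⁻²`. -/
theorem stmt8 :
    Set.BijOn Hmap {z : Fin 6 → ℝ | z 1 ≠ 0} {z : Fin 6 → ℝ | z 1 ≠ 0} ∧
    (∀ z : Fin 6 → ℝ, z 1 ≠ 0 → Hinv (Hmap z) = z ∧ Hmap (Hinv z) = z) ∧
    (∀ z : Fin 6 → ℝ, z 1 ≠ 0 →
      ∃ D : (Fin 6 → ℝ) →L[ℝ] (Fin 6 → ℝ), HasFDerivAt Hinv D z ∧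
        LinearMap.det (D : (Fin 6 → ℝ) →ₗ[ℝ] (Fin 6 → ℝ)) = -((z 1)^2)⁻¹) := by
  refine ⟨⟨?_, ?_, ?_⟩, fun z hz => ⟨hinv_hmap z hz, hmap_hinv z hz⟩, fun z hz => ?_⟩
  · intro z hz
    simpa [Hmap, vec6_five] using hz
  · intro a ha b hb hab
    have := congrArg Hinv hab
    rwa [hinv_hmap a ha, hinv_hmap b hb] at this
  · intro y hy
    refine ⟨Hinv y, ?_, hmap_hinv y hy⟩
    simpa [Hinv, vec6_five] using hy
  · refine ⟨LinearMap.toContinuousLinearMap (Matrix.toLin' (Jmat z)),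
      hinv_hasFDerivAt z hz, ?_⟩
    rw [LinearMap.coe_toContinuousLinearMap, LinearMap.det_toLin']
    exact Jmat_det z hz
end
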